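/- arXiv:1807.10810 — 11 statements merged into one kernel-verified Lean document; each statement's English description precedes it below -/
import Mathlib

section
/- Let K be a field and f = Σ_{n≥0} aₙ tⁿ ∈ K[[t]] a formal power series. Then f is the expansion of a rational function (i.e., there exist polynomials P, Q ∈ K[t] with Q ≠ 0 and Q·f = P in K[[t]]) if and only if there exist natural numbers M and N such that for every k > N the Hankel determinant det((a_{i+j+k})_{0≤i,j≤M}) vanishes. -/
/-!
If `Q f = P` with `d = deg Q`, the reversed coefficient vector `(Q_d, …, Q_0)` kills every
Hankel matrix of size `d + 1` at shifts beyond `deg P`. Conversely, induct on the size: suppose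
the Hankel determinants of size `m + 1` vanish eventually but those of size `m` do not. At a
shift `s` with nonzero `m × m` determinant, a kernel vector of the `(m+1) × (m+1)` matrix gives an
order-`m` linear recurrence for the coefficients. Walking down from `s`, the vanishing of the
larger determinants carries both this recurrence and the nonvanishing of the smaller one, and
the recurrences obtained from different `s` agree because an invertible Hankel matrix determines
the coefficients. Finally, an eventual recurrence `a (n + m) = ∑ cⱼ a (n + j)` says exactly that
`(1 - ∑ cⱼ tᵐ⁻ʲ) f` is a polynomial.
-/

open Filter

def Matrix.hankel {R : Type*} (a : ℕ → R) (m k : ℕ) : Matrix (Fin m) (Fin m) R :=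
  Matrix.of fun i j => a ((i : ℕ) + (j : ℕ) + k)

def SatisfiesRecurrenceAt {R : Type*} [Semiring R] {m : ℕ} (c : Fin m → R) (a : ℕ → R)
    (n : ℕ) : Prop :=
  a (n + m) = ∑ j, c j * a (n + j)

namespace PowerSeries

theorem exists_eq_coe_of_coeff_eq_zero {R : Type*} [Semiring R] {g : PowerSeries R} {N : ℕ}
    (h : ∀ n, N ≤ n → coeff n g = 0) : ∃ P : Polynomial R, g = P := by
  refine ⟨trunc N g, ext fun n => ?_⟩
  rw [Polynomial.coeff_coe, coeff_trunc]
  split_ifs with hn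
  · rfl
  · exact h n (not_lt.mp hn)

theorem exists_polynomial_mul_eq_of_eventually_satisfiesRecurrenceAt {R : Type*} [Ring R]
    [Nontrivial R] {f : PowerSeries R} {m : ℕ} {c : Fin m → R}
    (h : ∀ᶠ n in atTop, SatisfiesRecurrenceAt c (coeff · f) n) :
    ∃ P Q : Polynomial R, Q ≠ 0 ∧ (Q : PowerSeries R) * f = (P : PowerSeries R) := by
  obtain ⟨N, hN⟩ := eventually_atTop.mp h
  set Q : Polynomial R := 1 - ∑ j, Polynomial.C (c j) * Polynomial.X ^ (m - j)
  have hQ0 : Q.coeff 0 = 1 := by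
    simp only [Q, Polynomial.coeff_sub, Polynomial.coeff_one_zero, Polynomial.finsetSum_coeff,
      Polynomial.coeff_C_mul, Polynomial.coeff_X_pow]
    rw [Finset.sum_eq_zero fun j _ => by rw [if_neg (by omega), mul_zero], sub_zero]
  have hcoeff (n : ℕ) : coeff (n + m) ((Q : PowerSeries R) * f) =
      coeff (n + m) f - ∑ j, c j * coeff (n + j) f := by
    rw [← Polynomial.coeToPowerSeries.ringHom_apply]
    simp only [Q, map_sub, map_one, map_sum, map_mul, map_pow,
      Polynomial.coeToPowerSeries.ringHom_apply, Polynomial.coe_C, Polynomial.coe_X, sub_mul,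
      one_mul, Finset.sum_mul, mul_assoc, coeff_C_mul, coeff_X_pow_mul']
    congr 1
    exact Finset.sum_congr rfl fun j _ => by
      rw [if_pos (by omega), show n + m - (m - j) = n + j by omega]
  obtain ⟨P, hP⟩ := exists_eq_coe_of_coeff_eq_zero (g := (Q : PowerSeries R) * f) (N := N + m)
    fun n hn => by
      obtain ⟨k, rfl⟩ := Nat.exists_eq_add_of_le' hn
      rw [← add_assoc, hcoeff, sub_eq_zero]
      exact hN (k + N) (by omega)
  exact ⟨P, Q, fun h => by simp [h] at hQ0, hP⟩

theorem coeff_add_natDegree_coe_mul {R : Type*} [Semiring R] (Q : Polynomial R)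
    (f : PowerSeries R) (n : ℕ) :
    coeff (n + Q.natDegree) ((Q : PowerSeries R) * f) =
      ∑ j : Fin (Q.natDegree + 1), Q.coeff (Q.natDegree - j) * coeff (n + j) f := by
  set d := Q.natDegree
  have hQ : (Q : PowerSeries R) = ∑ i ∈ Finset.range (d + 1), C (Q.coeff i) * X ^ i := by
    conv_lhs => rw [Q.as_sum_range_C_mul_X_pow]
    rw [← Polynomial.coeToPowerSeries.ringHom_apply]
    simp only [map_sum, map_mul, map_pow, Polynomial.coeToPowerSeries.ringHom_apply,
      Polynomial.coe_C, Polynomial.coe_X]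
    rfl
  rw [hQ, Fin.sum_univ_eq_sum_range (fun j => Q.coeff (d - j) * coeff (n + j) f),
    ← Finset.sum_range_reflect]
  simp only [Finset.sum_mul, map_sum, mul_assoc, coeff_C_mul, coeff_X_pow_mul']
  refine Finset.sum_congr rfl fun i hi => ?_
  rw [Finset.mem_range] at hi
  rw [if_pos (by omega), show d + 1 - 1 - i = d - i by omega,
    show n + d - (d - i) = n + i by omega]

end PowerSeries

namespace Matrix

theorem det_hankel_coeff_eq_zero_of_coe_mul_eq {R : Type*} [CommRing R] [IsDomain R]
    {f : PowerSeries R} {P Q : Polynomial R} (hQ : Q ≠ 0) (h : (Q : PowerSeries R) * f = P)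
    {k : ℕ} (hk : P.natDegree < k) :
    (hankel (PowerSeries.coeff · f) (Q.natDegree + 1) k).det = 0 := by
  refine exists_mulVec_eq_zero_iff.mp ⟨fun j => Q.coeff (Q.natDegree - j), ?_, ?_⟩
  · exact fun h0 => Polynomial.leadingCoeff_ne_zero.mpr hQ (by simpa using congrFun h0 0)
  · ext i
    have hcoeff := PowerSeries.coeff_add_natDegree_coe_mul Q f (i + k)
    rw [h, Polynomial.coeff_coe, Polynomial.coeff_eq_zero_of_natDegree_lt (by omega)] at hcoeff
    rw [Pi.zero_apply, hcoeff, mulVec, dotProduct]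
    exact Finset.sum_congr rfl fun j _ => by
      rw [hankel, of_apply, mul_comm, Nat.add_right_comm]

theorem hankel_mulVec_of_satisfiesRecurrenceAt {R : Type*} [CommSemiring R] {a : ℕ → R}
    {m : ℕ} {c : Fin m → R} {t : ℕ}
    (hc : ∀ i < m, SatisfiesRecurrenceAt c a (t + i)) :
    hankel a m t *ᵥ c = fun i : Fin m => a (t + i + m) := by
  ext i
  rw [mulVec, dotProduct, hc i i.2]
  exact Finset.sum_congr rfl fun j _ => by
    rw [hankel, of_apply, mul_comm, show (i : ℕ) + j + t = t + i + j by ring]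

section Domain

variable {R : Type*} [CommRing R] [IsDomain R] {a : ℕ → R} {m : ℕ}

theorem eq_of_satisfiesRecurrenceAt_of_det_hankel_ne_zero {c c' : Fin m → R} {t : ℕ}
    (ht : (hankel a m t).det ≠ 0) (hc : ∀ i < m, SatisfiesRecurrenceAt c a (t + i))
    (hc' : ∀ i < m, SatisfiesRecurrenceAt c' a (t + i)) : c = c' :=
  sub_eq_zero.mp <| eq_zero_of_mulVec_eq_zero ht <| by
    rw [mulVec_sub, hankel_mulVec_of_satisfiesRecurrenceAt hc,
      hankel_mulVec_of_satisfiesRecurrenceAt hc', sub_self]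

theorem det_hankel_ne_zero_of_succ {c : Fin m → R} {t : ℕ}
    (hc : ∀ i < m, SatisfiesRecurrenceAt c a (t + i)) (h : (hankel a m (t + 1)).det ≠ 0) :
    (hankel a m t).det ≠ 0 := by
  intro h0
  obtain ⟨u, hu0, hu⟩ := exists_mulVec_eq_zero_iff.mpr h0
  have hrow (l : Fin m) : ∑ j : Fin m, a (l + j + t) * u j = 0 := congrFun hu l
  refine h (exists_mulVec_eq_zero_iff.mp ⟨u, hu0, funext fun i => ?_⟩)
  rw [Pi.zero_apply, mulVec, dotProduct]
  by_cases hi : (i : ℕ) + 1 < m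
  · rw [← hrow ⟨i + 1, hi⟩]
    exact Finset.sum_congr rfl fun j _ => by
      rw [hankel, of_apply, show (i : ℕ) + j + (t + 1) = i + 1 + j + t by ring]
  · calc ∑ j, hankel a m (t + 1) i j * u j = ∑ j : Fin m, (∑ l, c l * a (t + j + l)) * u j :=
          Finset.sum_congr rfl fun j _ => by
            rw [hankel, of_apply, ← hc j j.2, show (i : ℕ) + j + (t + 1) = t + j + m by omega]
      _ = ∑ l, c l * ∑ j : Fin m, a (l + j + t) * u j := by
          simp only [Finset.sum_mul, Finset.mul_sum, mul_assoc]
          rw [Finset.sum_comm]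
          exact Finset.sum_congr rfl fun l _ => Finset.sum_congr rfl fun j _ => by
            rw [show t + j + l = l + j + t by ring]
      _ = 0 := by simp only [hrow, mul_zero, Finset.sum_const_zero]

end Domain

variable {K : Type*} [Field K] {a : ℕ → K} {m : ℕ}

theorem exists_satisfiesRecurrenceAt_of_det_hankel_succ_eq_zero {n : ℕ}
    (h : (hankel a (m + 1) n).det = 0)
    (hH : (hankel a m n).det ≠ 0 ∨ (hankel a m (n + 1)).det ≠ 0) :
    ∃ c : Fin m → K, ∀ i ≤ m, SatisfiesRecurrenceAt c a (n + i) := by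
  obtain ⟨v, hv0, hv⟩ := exists_mulVec_eq_zero_iff.mpr h
  have hrow (i : Fin (m + 1)) :
      ∑ j : Fin m, a (i + (j : ℕ) + n) * v j.castSucc + a (i + m + n) * v (Fin.last m) = 0 := by
    simpa [mulVec, dotProduct, hankel, Fin.sum_univ_castSucc] using congrFun hv i
  have hlast : v (Fin.last m) ≠ 0 := by
    intro hl
    have hv'0 : (fun j : Fin m => v j.castSucc) ≠ 0 := fun h' =>
      hv0 (funext (Fin.lastCases hl fun j => congrFun h' j))
    rcases hH with hH | hH
    · refine hH (exists_mulVec_eq_zero_iff.mp ⟨_, hv'0, funext fun i => ?_⟩)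
      simpa [hl, mulVec, dotProduct, hankel] using hrow i.castSucc
    · refine hH (exists_mulVec_eq_zero_iff.mp ⟨_, hv'0, funext fun i => ?_⟩)
      simpa [hl, mulVec, dotProduct, hankel, add_assoc, add_comm, add_left_comm]
        using hrow i.succ
  refine ⟨fun j => -v j.castSucc / v (Fin.last m), fun i hi => ?_⟩
  have hrel := hrow ⟨i, by omega⟩
  have hsum : ∑ j : Fin m, -v j.castSucc / v (Fin.last m) * a (n + i + j) =
      -(∑ j : Fin m, a (i + j + n) * v j.castSucc) / v (Fin.last m) := by
    rw [neg_div, Finset.sum_div, ← Finset.sum_neg_distrib]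
    exact Finset.sum_congr rfl fun j _ => by rw [show n + i + j = i + j + n by ring]; ring
  rw [SatisfiesRecurrenceAt, hsum, eq_div_iff hlast, show n + i + m = i + m + n by ring]
  linear_combination hrel

theorem satisfiesRecurrenceAt_of_det_hankel_eq_zero {c : Fin m → K} {N s : ℕ}
    (hbig : ∀ k, N ≤ k → (hankel a (m + 1) k).det = 0) (hs : (hankel a m s).det ≠ 0)
    (hc : ∀ i ≤ m, SatisfiesRecurrenceAt c a (s + i)) {n : ℕ} (hNn : N ≤ n)
    (hn : n ≤ s + m) : SatisfiesRecurrenceAt c a n := by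
  have hdescend : (hankel a m (min n s)).det ≠ 0 ∧
      ∀ q, min n s ≤ q → q ≤ s + m → SatisfiesRecurrenceAt c a q := by
    refine Nat.decreasingInduction' (fun k hks hk ⟨hdet, hrec⟩ => ?_) (min_le_right n s)
      ⟨hs, fun q hq _ => by simpa [Nat.add_sub_cancel' hq] using hc (q - s) (by omega)⟩
    obtain ⟨c', hc'⟩ := exists_satisfiesRecurrenceAt_of_det_hankel_succ_eq_zero
      (hbig k (by omega)) (Or.inr hdet)
    obtain rfl : c' = c := eq_of_satisfiesRecurrenceAt_of_det_hankel_ne_zero hdet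
      (fun i hi => by simpa [Nat.add_right_comm k 1 i, add_assoc] using hc' (i + 1) (by omega))
      (fun i hi => hrec _ (by omega) (by omega))
    have hrec' (q : ℕ) (hkq : k ≤ q) (hq : q ≤ s + m) : SatisfiesRecurrenceAt c' a q := by
      rcases hkq.eq_or_lt with rfl | hkq
      · exact hc' 0 (Nat.zero_le m)
      · exact hrec q hkq hq
    exact ⟨det_hankel_ne_zero_of_succ (fun i hi => hrec' _ (by omega) (by omega)) hdet, hrec'⟩
  exact hdescend.2 n (min_le_left n s) hn

theorem exists_eventually_satisfiesRecurrenceAt_of_frequently_det_hankel_ne_zero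
    (hbig : ∀ᶠ k in atTop, (hankel a (m + 1) k).det = 0)
    (hsmall : ∃ᶠ k in atTop, (hankel a m k).det ≠ 0) :
    ∃ c : Fin m → K, ∀ᶠ n in atTop, SatisfiesRecurrenceAt c a n := by
  obtain ⟨N, hN⟩ := eventually_atTop.mp hbig
  have hextend (s : ℕ) (hs : N ≤ s) (hdet : (hankel a m s).det ≠ 0) :
      ∃ c : Fin m → K, ∀ n, N ≤ n → n ≤ s + m → SatisfiesRecurrenceAt c a n := by
    obtain ⟨c, hc⟩ :=
      exists_satisfiesRecurrenceAt_of_det_hankel_succ_eq_zero (hN s hs) (Or.inl hdet)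
    exact ⟨c, fun n => satisfiesRecurrenceAt_of_det_hankel_eq_zero hN hdet hc⟩
  obtain ⟨s₀, hs₀, hdet₀⟩ := frequently_atTop.mp hsmall N
  obtain ⟨c, hc⟩ := hextend s₀ hs₀ hdet₀
  refine ⟨c, eventually_atTop.mpr ⟨N, fun n hn => ?_⟩⟩
  obtain ⟨s, hs, hdet⟩ := frequently_atTop.mp hsmall (max n s₀)
  obtain ⟨c', hc'⟩ := hextend s (by omega) hdet
  obtain rfl : c' = c := eq_of_satisfiesRecurrenceAt_of_det_hankel_ne_zero hdet₀
    (fun i _ => hc' _ (by omega) (by omega)) (fun i _ => hc _ (by omega) (by omega))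
  exact hc' n hn (by omega)

theorem exists_eventually_satisfiesRecurrenceAt_of_eventually_det_hankel_eq_zero :
    ∀ {m : ℕ}, (∀ᶠ k in atTop, (hankel a m k).det = 0) →
      ∃ (d : ℕ) (c : Fin d → K), ∀ᶠ n in atTop, SatisfiesRecurrenceAt c a n
  | 0, h => absurd h.exists (by simp [det_isEmpty])
  | m + 1, h => by
    by_cases hm : ∀ᶠ k in atTop, (hankel a m k).det = 0
    · exact exists_eventually_satisfiesRecurrenceAt_of_eventually_det_hankel_eq_zero hm
    · exact ⟨m, exists_eventually_satisfiesRecurrenceAt_of_frequently_det_hankel_ne_zero h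
        (not_eventually.mp hm)⟩

end Matrix

/-- The Hankel determinant criterion for rationality of a formal power series, used in
Deligne's Weil I in the proof that (1.7) implies (1.6): `f = ∑ aₙ tⁿ ∈ K[[t]]` is the
expansion of a rational function if and only if for some `M`, `N`, all the Hankel
determinants `det((a_{i+j+k})_{0 ≤ i,j ≤ M})` with `k > N` vanish. -/
theorem powerSeries_rational_iff_hankel_determinants_vanish
    {K : Type*} [Field K] (f : PowerSeries K) :
    (∃ P Q : Polynomial K, Q ≠ 0 ∧ (Q : PowerSeries K) * f = (P : PowerSeries K)) ↔
      ∃ M N : ℕ, ∀ k : ℕ, N < k →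
        (Matrix.of fun i j : Fin (M + 1) =>
            PowerSeries.coeff ((i : ℕ) + (j : ℕ) + k) f).det = 0 := by
  constructor
  · rintro ⟨P, Q, hQ, hQf⟩
    exact ⟨Q.natDegree, P.natDegree,
      fun k => Matrix.det_hankel_coeff_eq_zero_of_coe_mul_eq hQ hQf⟩
  · rintro ⟨M, N, h⟩
    obtain ⟨d, c, hc⟩ :=
      Matrix.exists_eventually_satisfiesRecurrenceAt_of_eventually_det_hankel_eq_zero
        (a := (PowerSeries.coeff · f)) (m := M + 1) ((eventually_gt_atTop N).mono h)
    exact PowerSeries.exists_polynomial_mul_eq_of_eventually_satisfiesRecurrenceAt hc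
end

section
/- Let K ⊆ L be a field extension and f ∈ K[[t]] a formal power series. If the image of f in L[[t]] is the expansion of a rational function over L (i.e., there exist P, Q ∈ L[t] with Q ≠ 0 and Q·f = P in L[[t]]), then f is already the expansion of a rational function over K: there exist P', Q' ∈ K[t] with Q' ≠ 0 and Q'·f = P' in K[[t]]. -/
/-!
Choose a `K`-linear functional `ℓ : L → K` that does not vanish on some coefficient of `Q`.
Applied coefficientwise, `ℓ` commutes with multiplication by power series with coefficients
in `K`, so it carries `Q · f = P` to `ℓ(Q) · f = ℓ(P)` over `K`, and `ℓ(Q) ≠ 0`.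
-/

open scoped PowerSeries Polynomial

section

variable {R A : Type*} [CommSemiring R] [Semiring A] [Algebra R A]

noncomputable def Polynomial.mapLinear (ℓ : A →ₗ[R] R) (p : A[X]) : R[X] :=
  ⟨⟨p.toFinsupp.coeff.mapRange ℓ ℓ.map_zero⟩⟩

@[simp]
theorem Polynomial.coeff_mapLinear (ℓ : A →ₗ[R] R) (p : A[X]) (n : ℕ) :
    (p.mapLinear ℓ).coeff n = ℓ (p.coeff n) := rfl

noncomputable def PowerSeries.mapLinear (ℓ : A →ₗ[R] R) (g : A⟦X⟧) : R⟦X⟧ :=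
  PowerSeries.mk fun n ↦ ℓ (PowerSeries.coeff n g)

@[simp]
theorem PowerSeries.coeff_mapLinear (ℓ : A →ₗ[R] R) (g : A⟦X⟧) (n : ℕ) :
    PowerSeries.coeff n (g.mapLinear ℓ) = ℓ (PowerSeries.coeff n g) :=
  PowerSeries.coeff_mk _ _

theorem Polynomial.coe_mapLinear (ℓ : A →ₗ[R] R) (p : A[X]) :
    (p.mapLinear ℓ : R⟦X⟧) = (p : A⟦X⟧).mapLinear ℓ := by
  ext n
  simp

theorem PowerSeries.mapLinear_mul_map_algebraMap (ℓ : A →ₗ[R] R) (g : A⟦X⟧) (f : R⟦X⟧) :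
    (g * map (algebraMap R A) f).mapLinear ℓ = g.mapLinear ℓ * f := by
  ext n
  simp only [coeff_mapLinear, coeff_mul, coeff_map, map_sum, ← Algebra.commutes,
    ← Algebra.smul_def, map_smul, smul_eq_mul]
  exact Finset.sum_congr rfl fun _ _ ↦ mul_comm _ _

end

/-- Descent of rationality of a power series along a field extension `K ⊆ L`, as used in
Deligne's Weil I to show `Z(X₀, t) ∈ ℤ[[t]] ∩ ℚ_l(t) ⊆ ℚ(t)`: if the image of
`f ∈ K[[t]]` in `L[[t]]` is the expansion of a rational function over `L`, then `f` is
the expansion of a rational function over `K`. -/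
theorem powerSeries_rational_descent_of_rational_over_extension
    {K L : Type*} [Field K] [Field L] [Algebra K L] (f : PowerSeries K)
    (h : ∃ P Q : Polynomial L, Q ≠ 0 ∧
      (Q : PowerSeries L) * PowerSeries.map (algebraMap K L) f = (P : PowerSeries L)) :
    ∃ P' Q' : Polynomial K, Q' ≠ 0 ∧ (Q' : PowerSeries K) * f = (P' : PowerSeries K) := by
  obtain ⟨P, Q, hQ, hPQ⟩ := h
  obtain ⟨n, hn⟩ : ∃ n, Q.coeff n ≠ 0 := not_forall.mp (Polynomial.ext_iff.not.mp hQ)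
  obtain ⟨ℓ, hℓ⟩ := Module.Projective.exists_dual_ne_zero K hn
  refine ⟨P.mapLinear ℓ, Q.mapLinear ℓ, fun hQ' ↦ hℓ ?_, ?_⟩
  · simpa using congrArg (Polynomial.coeff · n) hQ'
  · rw [Polynomial.coe_mapLinear, Polynomial.coe_mapLinear, ← hPQ,
      PowerSeries.mapLinear_mul_map_algebraMap]
end

section
/- (Fatou's lemma) Let f ∈ ℤ[[t]] be a formal power series with integer coefficients and constant coefficient 1. Suppose f is the expansion of a rational function over ℚ, i.e., there exist P, Q ∈ ℚ[t] with Q(0) ≠ 0 and Q·f = P in ℚ[[t]]. Then there exist coprime polynomials P', Q' ∈ ℤ[t] with integer coefficients satisfying P'(0) = Q'(0) = 1 and Q'·f = P' in ℚ[[t]]. -/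
/-!
Reduce the fraction over `ℚ` and scale the denominator to a primitive `Q ∈ ℤ[t]`; then `P = Q f`
has integer coefficients, and clearing denominators in a Bézout relation over `ℚ` gives
`a P + b Q = n` with `0 ≠ n ∈ ℤ`, so `Q g = n` in `ℤ[[t]]` for `g = a f + b`. If a prime `p`
divided `Q(0)`, it would divide `n`; as `p` is prime in `ℤ[[t]]` and does not divide the primitive
`Q`, it divides `g`, and `Q (g / p) = n / p` — an infinite descent. Hence `Q(0) = ±1`, and dividing
`P` and `Q` by `Q(0) = P(0)` gives the normalized pair.
-/

open Polynomial
open scoped PowerSeries nonZeroDivisors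

namespace PowerSeries

variable {R : Type*}

theorem C_dvd_iff_dvd_coeff [CommSemiring R] (a : R) (g : R⟦X⟧) :
    C a ∣ g ↔ ∀ n, a ∣ coeff n g := by
  refine ⟨fun ⟨h, hg⟩ n ↦ ⟨coeff n h, by rw [hg, coeff_C_mul]⟩, fun hg ↦ ?_⟩
  choose h hh using hg
  exact ⟨mk h, by ext n; rw [coeff_C_mul, coeff_mk, hh]⟩

theorem C_dvd_coe_iff [CommSemiring R] (a : R) (p : R[X]) :
    C a ∣ (p : R⟦X⟧) ↔ Polynomial.C a ∣ p := by
  simp only [C_dvd_iff_dvd_coeff, Polynomial.coeff_coe, Polynomial.C_dvd_iff_dvd_coeff]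

theorem prime_C [CommRing R] {p : R} (hp : Prime p) : Prime (C p : R⟦X⟧) := by
  have : (Ideal.span {p}).IsPrime := (Ideal.span_singleton_prime hp.ne_zero).mpr hp
  have hker : Ideal.span {C p} = RingHom.ker (map (Ideal.Quotient.mk (Ideal.span {p}))) := by
    ext g
    simp [Ideal.mem_span_singleton, C_dvd_iff_dvd_coeff, PowerSeries.ext_iff,
      Ideal.Quotient.eq_zero_iff_dvd]
  rw [← Ideal.span_singleton_prime (map_ne_zero_iff _ C_injective |>.mpr hp.ne_zero), hker]
  exact RingHom.ker_isPrime _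

variable [CommRing R] [IsDomain R]

theorem not_dvd_constantCoeff_of_mul_eq_C [WfDvdMonoid R] {p : R} (hp : Prime p) {q : R⟦X⟧}
    (hq : ¬ C p ∣ q) {n : R} (hn : n ≠ 0) {g : R⟦X⟧} (hqg : q * g = C n) :
    ¬ p ∣ constantCoeff q := by
  induction n using (wellFounded_dvdNotUnit (α := R)).induction generalizing g with
  | _ n ih =>
  intro hpq
  obtain ⟨m, rfl⟩ : p ∣ n := by
    have := congrArg constantCoeff hqg
    rw [map_mul, constantCoeff_C] at this
    exact this ▸ dvd_mul_of_dvd_left hpq _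
  obtain ⟨g₁, rfl⟩ : C p ∣ g :=
    ((prime_C hp).dvd_or_dvd ⟨C m, by rw [hqg, map_mul]⟩).resolve_left hq
  have hm : m ≠ 0 := right_ne_zero_of_mul hn
  refine ih m ⟨hm, p, hp.not_isUnit, mul_comm p m⟩ hm (g := g₁) ?_ hpq
  have hCp : (C p : R⟦X⟧) ≠ 0 := map_ne_zero_iff _ C_injective |>.mpr hp.ne_zero
  apply mul_left_cancel₀ hCp
  rw [mul_left_comm, hqg, map_mul]

theorem isUnit_constantCoeff_of_mul_eq_C [UniqueFactorizationMonoid R] {q : R⟦X⟧}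
    (hq : ∀ r, C r ∣ q → IsUnit r) {n : R} (hn : n ≠ 0) {g : R⟦X⟧} (hqg : q * g = C n) :
    IsUnit (constantCoeff q) := by
  by_contra hu
  have h0 : constantCoeff q ≠ 0 := by
    intro h0
    have := congrArg constantCoeff hqg
    rw [map_mul, constantCoeff_C, h0, zero_mul] at this
    exact hn this.symm
  obtain ⟨p, hirr, hpq⟩ := WfDvdMonoid.exists_irreducible_factor hu h0
  exact not_dvd_constantCoeff_of_mul_eq_C hirr.prime (fun h ↦ hirr.not_isUnit (hq p h)) hn hqg hpq

end PowerSeries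

theorem Polynomial.exists_isCoprime_coe_mul_eq {K : Type*} [Field K] {P Q : K[X]} {F : K⟦X⟧}
    (hQ : Q ≠ 0) (hQF : (Q : K⟦X⟧) * F = P) :
    ∃ P₀ Q₀ : K[X], IsCoprime P₀ Q₀ ∧ Q₀ ≠ 0 ∧ (Q₀ : K⟦X⟧) * F = P₀ := by
  classical
  set d := GCDMonoid.gcd P Q
  have hd : (d : K⟦X⟧) ≠ 0 := mt Polynomial.coe_eq_zero_iff.mp (gcd_ne_zero_of_right hQ)
  refine ⟨P / d, Q / d, isCoprime_div_gcd_div_gcd hQ, right_div_gcd_ne_zero hQ, ?_⟩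
  apply mul_left_cancel₀ hd
  rw [← mul_assoc, ← Polynomial.coe_mul, ← Polynomial.coe_mul,
    EuclideanDomain.mul_div_cancel' (gcd_ne_zero_of_right hQ) (gcd_dvd_right P Q),
    EuclideanDomain.mul_div_cancel' (gcd_ne_zero_of_right hQ) (gcd_dvd_left P Q), hQF]

theorem Polynomial.exists_coe_mul_eq_of_coe_map_mul_eq {R S : Type*} [CommRing R] [CommRing S]
    {φ : R →+* S} (hφ : Function.Injective φ) {q : R[X]} {f : R⟦X⟧} {P : S[X]}
    (h : (q.map φ : S⟦X⟧) * PowerSeries.map φ f = P) :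
    ∃ p : R[X], p.map φ = P ∧ (q : R⟦X⟧) * f = p := by
  have hlift : P ∈ lifts φ := by
    rw [lifts_iff_coeff_lifts]
    intro n
    rw [← Polynomial.coeff_coe, ← h, Polynomial.polynomial_map_coe, ← map_mul,
      PowerSeries.coeff_map]
    exact ⟨_, rfl⟩
  obtain ⟨p, rfl⟩ := (mem_lifts P).mp hlift
  refine ⟨p, rfl, PowerSeries.map_injective φ hφ ?_⟩
  rw [map_mul, ← Polynomial.polynomial_map_coe, h, Polynomial.polynomial_map_coe]

section FractionRing

variable {R K : Type*} [CommRing R] [IsDomain R] [Field K] [Algebra R K] [IsFractionRing R K]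

theorem Polynomial.exists_isPrimitive_map_eq_C_mul [NormalizedGCDMonoid R] {p : K[X]}
    (hp : p ≠ 0) :
    ∃ q : R[X], q.IsPrimitive ∧ ∃ c : K, c ≠ 0 ∧ q.map (algebraMap R K) = C c * p := by
  obtain ⟨b, hb, hbp⟩ := IsLocalization.integerNormalization_spec R⁰ p
  set p' := IsLocalization.integerNormalization R⁰ p
  have hp' : p'.content ≠ 0 := by
    rwa [Ne, content_eq_zero_iff, IsFractionRing.integerNormalization_eq_zero_iff]
  have hc : algebraMap R K p'.content ≠ 0 := by
    rwa [Ne, IsFractionRing.to_map_eq_zero_iff]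
  refine ⟨p'.primPart, p'.isPrimitive_primPart, algebraMap R K b / algebraMap R K p'.content,
    div_ne_zero (by simpa using nonZeroDivisors.ne_zero hb) hc, ?_⟩
  apply mul_left_cancel₀ (C_ne_zero.mpr hc)
  rw [← Polynomial.map_C, ← Polynomial.map_mul, ← p'.eq_C_content_mul_primPart, hbp,
    Polynomial.map_C, ← mul_assoc, ← C_mul, mul_div_cancel₀ _ hc, Algebra.smul_def,
    algebraMap_apply]

theorem Polynomial.exists_mul_add_mul_eq_C_of_isCoprime_map {p q : R[X]}
    (h : IsCoprime (p.map (algebraMap R K)) (q.map (algebraMap R K))) :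
    ∃ a b : R[X], ∃ n : R, n ≠ 0 ∧ a * p + b * q = C n := by
  obtain ⟨A, B, hAB⟩ := h
  obtain ⟨α, hα, hA⟩ := IsLocalization.integerNormalization_spec R⁰ A
  obtain ⟨β, hβ, hB⟩ := IsLocalization.integerNormalization_spec R⁰ B
  refine ⟨C β * IsLocalization.integerNormalization R⁰ A,
    C α * IsLocalization.integerNormalization R⁰ B, α * β,
    mul_ne_zero (nonZeroDivisors.ne_zero hα) (nonZeroDivisors.ne_zero hβ), ?_⟩
  apply Polynomial.map_injective _ (IsFractionRing.injective R K)
  simp only [Polynomial.map_add, Polynomial.map_mul, Polynomial.map_C, hA, hB, Algebra.smul_def,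
    algebraMap_apply, map_mul]
  linear_combination C (algebraMap R K α) * C (algebraMap R K β) * hAB

theorem PowerSeries.exists_isPrimitive_coe_mul_eq_of_coe_mul_map_eq [NormalizedGCDMonoid R]
    {f : R⟦X⟧} {P Q : K[X]} (hQ : Q ≠ 0) (hQf : (Q : K⟦X⟧) * map (algebraMap R K) f = P) :
    ∃ p q : R[X], q.IsPrimitive ∧
      IsCoprime (p.map (algebraMap R K)) (q.map (algebraMap R K)) ∧ (q : R⟦X⟧) * f = p := by
  obtain ⟨P₀, Q₀, hcop, hQ₀, hQ₀f⟩ := exists_isCoprime_coe_mul_eq hQ hQf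
  obtain ⟨q, hq, c, hc, hqQ₀⟩ := exists_isPrimitive_map_eq_C_mul (R := R) hQ₀
  obtain ⟨p, hpP₀, hqf⟩ := exists_coe_mul_eq_of_coe_map_mul_eq (P := Polynomial.C c * P₀)
    (IsFractionRing.injective R K)
    (by rw [hqQ₀, Polynomial.coe_mul, Polynomial.coe_mul, mul_assoc, hQ₀f])
  refine ⟨p, q, hq, ?_, hqf⟩
  rwa [hpP₀, hqQ₀, isCoprime_mul_unit_left (isUnit_C.mpr hc.isUnit)]

end FractionRing

/-- Fatou's lemma, as invoked in Deligne's Weil I in the proof that (1.7) implies (1.6):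
if `f ∈ ℤ[[t]]` has constant coefficient `1` and is the expansion of a rational function
over `ℚ`, then `f = P'/Q'` with `P', Q' ∈ ℤ[t]` coprime (in `ℚ[t]`) and
`P'(0) = Q'(0) = 1`. -/
theorem fatou_lemma_integral_power_series
    (f : PowerSeries ℤ) (h1 : PowerSeries.constantCoeff f = 1)
    (h : ∃ P Q : Polynomial ℚ, Q.eval 0 ≠ 0 ∧
      (Q : PowerSeries ℚ) * PowerSeries.map (Int.castRingHom ℚ) f = (P : PowerSeries ℚ)) :
    ∃ P' Q' : Polynomial ℤ,
      IsCoprime (P'.map (Int.castRingHom ℚ)) (Q'.map (Int.castRingHom ℚ)) ∧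
      P'.eval 0 = 1 ∧ Q'.eval 0 = 1 ∧
      ((Q'.map (Int.castRingHom ℚ) : Polynomial ℚ) : PowerSeries ℚ) *
          PowerSeries.map (Int.castRingHom ℚ) f =
        ((P'.map (Int.castRingHom ℚ) : Polynomial ℚ) : PowerSeries ℚ) := by
  obtain ⟨P, Q, hQ0, hQf⟩ := h
  have hQ : Q ≠ 0 := by rintro rfl; simp at hQ0
  rw [← algebraMap_int_eq] at hQf ⊢
  obtain ⟨p, q, hq, hpq, hqf⟩ :=
    PowerSeries.exists_isPrimitive_coe_mul_eq_of_coe_mul_map_eq hQ hQf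
  obtain ⟨a, b, n, hn, hab⟩ := exists_mul_add_mul_eq_C_of_isCoprime_map hpq
  obtain ⟨u, hu⟩ : IsUnit (q.coeff 0) := by
    rw [← Polynomial.constantCoeff_coe]
    refine PowerSeries.isUnit_constantCoeff_of_mul_eq_C
      (fun r hr ↦ hq r ((PowerSeries.C_dvd_coe_iff r q).mp hr)) hn (g := a * f + b) ?_
    rw [mul_add, mul_left_comm, hqf, mul_comm (q : ℤ⟦X⟧), ← Polynomial.coe_mul,
      ← Polynomial.coe_mul, ← Polynomial.coe_add, hab, Polynomial.coe_C]
  have hpq0 : p.coeff 0 = q.coeff 0 := by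
    have := congrArg PowerSeries.constantCoeff hqf
    rwa [map_mul, h1, mul_one, Polynomial.constantCoeff_coe, Polynomial.constantCoeff_coe,
      eq_comm] at this
  have hu' : IsUnit (C (algebraMap ℤ ℚ ↑u⁻¹)) := isUnit_C.mpr ((u⁻¹).isUnit.map _)
  refine ⟨C ((u⁻¹ : ℤˣ) : ℤ) * p, C ((u⁻¹ : ℤˣ) : ℤ) * q, ?_, ?_, ?_, ?_⟩
  · rwa [Polynomial.map_mul, Polynomial.map_mul, Polynomial.map_C, isCoprime_mul_unit_left hu']
  · rw [← coeff_zero_eq_eval_zero, coeff_C_mul, hpq0, ← hu, Units.inv_mul]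
  · rw [← coeff_zero_eq_eval_zero, coeff_C_mul, ← hu, Units.inv_mul]
  · rw [Polynomial.polynomial_map_coe, Polynomial.polynomial_map_coe, ← map_mul,
      Polynomial.coe_mul, Polynomial.coe_mul, mul_assoc, hqf]
end

section
/- Let P ∈ ℚ[X] be a polynomial with P(0) = 1 such that for every complex root z of P, the inverse z⁻¹ is an algebraic integer. Then every coefficient of P is an integer. -/
open Polynomial

lemma esymm_mem_integralClosure (s : Multiset ℂ) (hs : ∀ x ∈ s, IsIntegral ℤ x) (k : ℕ) :
    s.esymm k ∈ integralClosure ℤ ℂ := by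
  refine Subalgebra.multiset_sum_mem _ fun x hx => ?_
  simp only [Multiset.mem_map] at hx
  obtain ⟨t, ht, rfl⟩ := hx
  refine Subalgebra.multiset_prod_mem _ fun y hy => ?_
  exact hs y (Multiset.mem_of_le (Multiset.mem_powersetCard.mp ht).1 hy)

/-- The integrality step (via the Gauss lemma) in Deligne's deduction of (1.6) from (1.7)
in Weil I: if `P ∈ ℚ[X]` has `P(0) = 1` and the inverse of every complex root of `P` is
an algebraic integer, then all coefficients of `P` are integers. -/
theorem coeffs_integral_of_inverse_roots_algebraic_integers
    (P : Polynomial ℚ) (h0 : P.eval 0 = 1)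
    (hroots : ∀ z ∈ (P.map (algebraMap ℚ ℂ)).roots, IsIntegral ℤ z⁻¹) :
    ∀ n : ℕ, ∃ m : ℤ, P.coeff n = (m : ℚ) := by
  set Q : Polynomial ℂ := P.map (algebraMap ℚ ℂ) with hQdef
  have hQ0 : Q.coeff 0 = 1 := by
    rw [coeff_map, coeff_zero_eq_eval_zero, h0, map_one]
  have hQne : Q ≠ 0 := fun h => by simp [h] at hQ0
  set R : Polynomial ℂ := Q.reverse with hRdef
  have htd : Q.natTrailingDegree = 0 := by
    rw [natTrailingDegree_eq_zero]
    exact Or.inr (by rw [hQ0]; exact one_ne_zero)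
  have hRlc : R.leadingCoeff = 1 := by
    rw [hRdef, reverse_leadingCoeff, trailingCoeff, htd, hQ0]
  have hRd : R.natDegree = Q.natDegree := by
    rw [hRdef, reverse_natDegree, htd, tsub_zero]
  have hRne : R ≠ 0 := fun h => by simp [h] at hRlc
  -- roots of R are algebraic integers
  have hRroots : ∀ w ∈ R.roots, IsIntegral ℤ w := by
    intro w hw
    have hwroot : R.eval w = 0 := (mem_roots hRne).mp hw
    have hwne : w ≠ 0 := by
      intro h
      rw [h, ← coeff_zero_eq_eval_zero, hRdef, coeff_zero_reverse] at hwroot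
      exact hQne (leadingCoeff_eq_zero.mp hwroot)
    letI : Invertible (w⁻¹) := invertibleOfNonzero (inv_ne_zero hwne)
    have hkey := eval₂_reverse_eq_zero_iff (RingHom.id ℂ) (w⁻¹) Q
    have hinv : (⅟(w⁻¹) : ℂ) = w := by rw [invOf_eq_inv, inv_inv]
    rw [hinv] at hkey
    have : Q.eval w⁻¹ = 0 := by
      rw [eval, ← hkey, ← hRdef, ← eval]; exact hwroot
    have hmem : w⁻¹ ∈ Q.roots := (mem_roots hQne).mpr this
    have := hroots _ hmem
    rwa [inv_inv] at this
  -- all coefficients of R are algebraic integers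
  have hRcard : Multiset.card R.roots = R.natDegree :=
    (splits_iff_card_roots.mp (IsAlgClosed.splits R))
  have hRcoeff : ∀ k, IsIntegral ℤ (R.coeff k) := by
    intro k
    by_cases hk : k ≤ R.natDegree
    · rw [Polynomial.coeff_eq_esymm_roots_of_card hRcard hk, hRlc, one_mul]
      have h1 : ((-1 : ℂ) ^ (R.natDegree - k)) ∈ integralClosure ℤ ℂ := by
        exact pow_mem (neg_mem (one_mem _)) _
      have h2 := esymm_mem_integralClosure R.roots hRroots (R.natDegree - k)
      exact mul_mem h1 h2
    · rw [coeff_eq_zero_of_natDegree_lt (lt_of_not_ge hk)]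
      exact isIntegral_zero
  -- transfer to Q
  have hQcoeff : ∀ n, IsIntegral ℤ (Q.coeff n) := by
    intro n
    by_cases hn : n ≤ Q.natDegree
    · have : R.coeff (Q.natDegree - n) = Q.coeff n := by
        rw [hRdef, coeff_reverse, revAt_le (Nat.sub_le _ _), Nat.sub_sub_self hn]
      rw [← this]; exact hRcoeff _
    · rw [coeff_eq_zero_of_natDegree_lt (lt_of_not_ge hn)]
      exact isIntegral_zero
  intro n
  have h1 : IsIntegral ℤ ((algebraMap ℚ ℂ) (P.coeff n)) := by
    rw [← coeff_map, ← hQdef]; exact hQcoeff n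
  have h2 : IsIntegral ℤ (P.coeff n) :=
    (isIntegral_algebraMap_iff ((algebraMap ℚ ℂ).injective)).mp h1
  obtain ⟨m, hm⟩ := IsIntegrallyClosed.isIntegral_iff.mp h2
  exact ⟨m, by rw [← hm]; simp⟩
end

section
/- Let K be a field of characteristic zero, V a finite-dimensional K-vector space, F : V → V a K-linear endomorphism, and k ≥ 1 an integer. Assume that for every n ≥ 1 the trace Tr(Fⁿ) lies in the prime subfield ℚ ⊆ K. Let F^{⊗2k} denote the induced endomorphism of the 2k-th tensor power ⨂^{2k} V. Then for every n ≥ 1 there exists a nonnegative rational number r with Tr((F^{⊗2k})ⁿ) = r in K. Consequently the power series Σ_{n≥1} Tr((F^{⊗2k})ⁿ) tⁿ, which equals t·(d/dt) log det(1 − t·F^{⊗2k})⁻¹, has nonnegative rational coefficients. -/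
open scoped TensorProduct

open PiTensorProduct in
/-- The `(m+1)`-st tensor power is equivalent to `V ⊗ (m-th tensor power)`. -/
noncomputable def tensorPowerSuccEquivAux (K V : Type*) [Field K] [AddCommGroup V] [Module K V]
    (m : ℕ) : (⨂[K]^(m + 1) V) ≃ₗ[K] V ⊗[K] (⨂[K]^m V) :=
  (reindex K (fun _ : Fin (m + 1) => V)
      ((finCongr (Nat.add_comm m 1)).trans (finSumFinEquiv (m := 1) (n := m)).symm)) ≪≫ₗ
    (tmulEquiv K V).symm ≪≫ₗ
      TensorProduct.congr (subsingletonEquiv (0 : Fin 1)) (LinearEquiv.refl K _)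

open PiTensorProduct in
lemma tensorPowerSuccEquivAux_conj_map {K V : Type*} [Field K] [AddCommGroup V] [Module K V]
    (m : ℕ) (F : V →ₗ[K] V) :
    (tensorPowerSuccEquivAux K V m).conj (PiTensorProduct.map fun _ : Fin (m + 1) => F) =
      TensorProduct.map F (PiTensorProduct.map fun _ : Fin m => F) := by
  have key : (tensorPowerSuccEquivAux K V m).toLinearMap ∘ₗ
      (PiTensorProduct.map fun _ : Fin (m + 1) => F) =
      (TensorProduct.map F (PiTensorProduct.map fun _ : Fin m => F)) ∘ₗ
        (tensorPowerSuccEquivAux K V m).toLinearMap := by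
    apply PiTensorProduct.ext
    ext x
    simp only [LinearMap.compMultilinearMap_apply, LinearMap.coe_comp, LinearEquiv.coe_coe,
      Function.comp_apply, map_tprod, tensorPowerSuccEquivAux, LinearEquiv.trans_apply,
      reindex_tprod]
    rw [show ((⨂ₜ[K] i : Fin 1 ⊕ Fin m,
          x (((finCongr (Nat.add_comm m 1)).trans finSumFinEquiv.symm).symm i)) :
            ⨂[K] _ : Fin 1 ⊕ Fin m, V) =
      (tmulEquiv (ι := Fin 1) (ι₂ := Fin m) K V)
        ((⨂ₜ[K] i : Fin 1,
            x (((finCongr (Nat.add_comm m 1)).trans finSumFinEquiv.symm).symm (Sum.inl i))) ⊗ₜ[K]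
          (⨂ₜ[K] i : Fin m,
            x (((finCongr (Nat.add_comm m 1)).trans finSumFinEquiv.symm).symm (Sum.inr i))))
        from by
      rw [tmulEquiv_apply]; congr 1; funext i; cases i <;> rfl]
    simp only [LinearEquiv.symm_apply_apply, TensorProduct.congr_tmul,
      subsingletonEquiv_apply_tprod, LinearEquiv.refl_apply, TensorProduct.map_tmul, map_tprod]
    rw [show ((⨂ₜ[K] i : Fin 1 ⊕ Fin m,
          F (x (((finCongr (Nat.add_comm m 1)).trans finSumFinEquiv.symm).symm i))) :
            ⨂[K] _ : Fin 1 ⊕ Fin m, V) =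
      (tmulEquiv (ι := Fin 1) (ι₂ := Fin m) K V)
        ((⨂ₜ[K] i : Fin 1,
            F (x (((finCongr (Nat.add_comm m 1)).trans finSumFinEquiv.symm).symm
              (Sum.inl i)))) ⊗ₜ[K]
          (⨂ₜ[K] i : Fin m,
            F (x (((finCongr (Nat.add_comm m 1)).trans finSumFinEquiv.symm).symm
              (Sum.inr i))))) from by
      rw [tmulEquiv_apply]; congr 1; funext i; cases i <;> rfl]
    simp
  rw [LinearEquiv.conj_apply, key, LinearMap.comp_assoc]
  ext x
  simp

lemma tensorPower_free_finite (K V : Type*) [Field K] [AddCommGroup V] [Module K V]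
    [FiniteDimensional K V] (m : ℕ) :
    Module.Free K (⨂[K]^m V) ∧ Module.Finite K (⨂[K]^m V) := by
  induction m with
  | zero =>
      have e := PiTensorProduct.isEmptyEquiv (R := K) (s := fun _ : Fin 0 => V) (Fin 0)
      exact ⟨Module.Free.of_equiv e.symm, Module.Finite.equiv e.symm⟩
  | succ m ih =>
      obtain ⟨h1, h2⟩ := ih
      have e := tensorPowerSuccEquivAux K V m
      exact ⟨Module.Free.of_equiv e.symm, Module.Finite.equiv e.symm⟩

lemma trace_tensorPower_map {K V : Type*} [Field K] [AddCommGroup V] [Module K V]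
    [FiniteDimensional K V] (F : V →ₗ[K] V) (m : ℕ) :
    LinearMap.trace K (⨂[K]^m V) (PiTensorProduct.map fun _ : Fin m => F) =
      (LinearMap.trace K V F) ^ m := by
  induction m with
  | zero =>
      have e := PiTensorProduct.isEmptyEquiv (R := K) (s := fun _ : Fin 0 => V) (Fin 0)
      have hmap : (PiTensorProduct.map fun _ : Fin 0 => F) = LinearMap.id := by
        apply PiTensorProduct.ext; ext x
        simp only [LinearMap.compMultilinearMap_apply, PiTensorProduct.map_tprod,
          LinearMap.id_coe, id_eq]
        congr; funext i; exact i.elim0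
      have h := LinearMap.trace_conj' (LinearMap.id : (⨂[K]^0 V) →ₗ[K] ⨂[K]^0 V) e
      have he : e.conj (LinearMap.id : (⨂[K]^0 V) →ₗ[K] ⨂[K]^0 V) = LinearMap.id :=
        LinearEquiv.conj_id e
      rw [hmap, pow_zero, ← h, he, LinearMap.trace_id, Module.finrank_self, Nat.cast_one]
  | succ m ih =>
      obtain ⟨hfree, hfin⟩ := tensorPower_free_finite K V m
      have h := LinearMap.trace_conj' (PiTensorProduct.map fun _ : Fin (m + 1) => F)
        (tensorPowerSuccEquivAux K V m)
      rw [tensorPowerSuccEquivAux_conj_map] at h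
      rw [← h, LinearMap.trace_tensorProduct', ih, pow_succ, mul_comm]

/-- Lemma (3.3) of Deligne's Weil I: if all traces `Tr(Fⁿ)` (`n ≥ 1`) of an endomorphism
`F` of a finite-dimensional vector space over a field `K` of characteristic zero are
rational, then for the induced endomorphism `F^{⊗2k}` of the `2k`-th tensor power, every
trace `Tr((F^{⊗2k})ⁿ)` (`n ≥ 1`) is a *nonnegative* rational number; equivalently, the
power series `∑_{n≥1} Tr((F^{⊗2k})ⁿ) tⁿ = t (d/dt) log det(1 - t F^{⊗2k})⁻¹` has
nonnegative rational coefficients. -/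
theorem trace_tensorPower_pow_nonneg_rational
    {K V : Type*} [Field K] [CharZero K] [AddCommGroup V] [Module K V]
    [FiniteDimensional K V] (F : V →ₗ[K] V) (k : ℕ) (hk : 1 ≤ k)
    (htr : ∀ n : ℕ, 1 ≤ n → ∃ r : ℚ, LinearMap.trace K V (F ^ n) = (r : K)) :
    ∀ n : ℕ, 1 ≤ n → ∃ r : ℚ, 0 ≤ r ∧
      LinearMap.trace K (⨂[K]^(2 * k) V)
        ((PiTensorProduct.map fun _ : Fin (2 * k) => F) ^ n) = (r : K) := by
  intro n hn
  obtain ⟨q, hq⟩ := htr n hn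
  refine ⟨q ^ (2 * k), Even.pow_nonneg ⟨k, by ring⟩ q, ?_⟩
  have hpow : (PiTensorProduct.map fun _ : Fin (2 * k) => F) ^ n =
      PiTensorProduct.map fun _ : Fin (2 * k) => F ^ n := by
    rw [← PiTensorProduct.map_pow]; rfl
  rw [hpow, trace_tensorPower_map, hq]
  push_cast
  ring
end

section
/- Let F be a field, K a finite set of natural numbers with 1 ∉ K, and D, E two multisets of nonzero elements of F with the same cardinality. Suppose there exists N such that for every integer n ≥ N that is not divisible by any element of K, the multiset of n-th powers of elements of D equals the multiset of n-th powers of elements of E. Then D = E as multisets. -/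
/-- Lemma (6.7) of Deligne's Weil I: two equinumerous finite families (multisets) of
nonzero elements of a field which have equal families of `n`-th powers for all large
enough `n` not divisible by any element of a fixed finite set `K` of integers `≠ 1`
coincide (up to order). -/
theorem multiset_eq_of_pow_eq_for_almost_all_exponents
    {F : Type*} [Field F] (K : Finset ℕ) (hK : 1 ∉ K) (D E : Multiset F)
    (hD : ∀ x ∈ D, x ≠ 0) (hE : ∀ x ∈ E, x ≠ 0)
    (hcard : Multiset.card D = Multiset.card E)
    (h : ∃ N : ℕ, ∀ n : ℕ, N ≤ n → (∀ k ∈ K, ¬ k ∣ n) →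
      D.map (· ^ n) = E.map (· ^ n)) :
    D = E := by
  classical
  obtain ⟨N, hN⟩ := h
  -- the finite set of elements involved
  set S : Finset F := (D + E).toFinset with hSdef
  have hS0 : ∀ x ∈ S, x ≠ 0 := by
    intro x hx
    rw [hSdef, Multiset.mem_toFinset, Multiset.mem_add] at hx
    exact hx.elim (hD x) (hE x)
  have hDS : ∀ x ∈ D, x ∈ S := fun x hx => by
    simp [hSdef, Multiset.mem_add, hx]
  have hES : ∀ x ∈ E, x ∈ S := fun x hx => by
    simp [hSdef, Multiset.mem_add, hx]
  -- the bad divisors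
  set M : Finset ℕ :=
    (K ∪ (S ×ˢ S).image (fun p => orderOf (p.1 / p.2))).filter (· ≠ 1) with hMdef
  set L : ℕ := ∏ m ∈ M.filter (2 ≤ ·), m with hLdef
  have hL1 : 1 ≤ L := by
    rw [hLdef]
    exact Finset.one_le_prod' fun m hm => le_trans one_le_two (Finset.mem_filter.mp hm).2
  set n : ℕ := N * L + 1 with hndef
  have hnN : N ≤ n := by
    calc N = N * 1 := (mul_one N).symm
    _ ≤ N * L := Nat.mul_le_mul_left N hL1
    _ ≤ n := Nat.le_succ _
  have hMnd : ∀ m ∈ M, ¬ m ∣ n := by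
    intro m hm hdvd
    have hm1 : m ≠ 1 := (Finset.mem_filter.mp hm).2
    rcases Nat.lt_or_ge m 2 with h2 | h2
    · interval_cases m
      · simp [hndef, Nat.zero_dvd] at hdvd
      · exact hm1 rfl
    · have hmL : m ∣ N * L := Dvd.dvd.mul_left
        (Finset.dvd_prod_of_mem _ (Finset.mem_filter.mpr ⟨hm, h2⟩)) N
      have : m ∣ 1 := (Nat.dvd_add_right hmL).mp hdvd
      exact hm1 (Nat.dvd_one.mp this)
  have hKn : ∀ k ∈ K, ¬ k ∣ n := by
    intro k hk
    refine hMnd k (Finset.mem_filter.mpr ⟨Finset.mem_union_left _ hk, ?_⟩)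
    exact fun h1 => hK (h1 ▸ hk)
  -- injectivity of `x ↦ x ^ n` on `S`
  have hinj : ∀ x ∈ S, ∀ y ∈ S, x ^ n = y ^ n → x = y := by
    intro x hx y hy hxy
    by_contra hne
    have hy0 : y ≠ 0 := hS0 y hy
    have hu1 : x / y ≠ 1 := fun h1 => hne (by
      field_simp at h1; exact h1)
    have hpow : (x / y) ^ n = 1 := by
      rw [div_pow, hxy, div_self (pow_ne_zero n hy0)]
    have hdvd : orderOf (x / y) ∣ n := orderOf_dvd_iff_pow_eq_one.mpr hpow
    have hmem : orderOf (x / y) ∈ M := by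
      refine Finset.mem_filter.mpr ⟨Finset.mem_union_right _ ?_, ?_⟩
      · exact Finset.mem_image.mpr ⟨(x, y), Finset.mk_mem_product hx hy, rfl⟩
      · exact fun h1 => hu1 (orderOf_eq_one_iff.mp h1)
    exact hMnd _ hmem hdvd
  have hmap : D.map (· ^ n) = E.map (· ^ n) := hN n hnN hKn
  -- conclude by counting
  ext a
  by_cases haD : a ∈ D
  · have haS : a ∈ S := hDS a haD
    have h1 : Multiset.count (a ^ n) (D.map (· ^ n)) = Multiset.count a D :=
      Multiset.count_map_eq_count _ D
        (fun x hx y hy => hinj x (hDS x hx) y (hDS y hy)) a haD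
    by_cases haE : a ∈ E
    · have h2 : Multiset.count (a ^ n) (E.map (· ^ n)) = Multiset.count a E :=
        Multiset.count_map_eq_count _ E
          (fun x hx y hy => hinj x (hES x hx) y (hES y hy)) a haE
      rw [← h1, ← h2, hmap]
    · exfalso
      have : a ^ n ∈ E.map (· ^ n) := by
        rw [← hmap]; exact Multiset.mem_map_of_mem _ haD
      obtain ⟨y, hyE, hy⟩ := Multiset.mem_map.mp this
      exact haE ((hinj a haS y (hES y hyE) hy.symm) ▸ hyE)
  · by_cases haE : a ∈ E
    · exfalso
      have : a ^ n ∈ D.map (· ^ n) := by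
        rw [hmap]; exact Multiset.mem_map_of_mem _ haE
      obtain ⟨y, hyD, hy⟩ := Multiset.mem_map.mp this
      exact haD ((hinj a (hES a haE) y (hDS y hyD) hy.symm) ▸ hyD)
    · rw [Multiset.count_eq_zero_of_notMem haD, Multiset.count_eq_zero_of_notMem haE]
end

section
/- Let k be a field of characteristic zero, V a nonzero finite-dimensional k-vector space, and ψ a nondegenerate alternating bilinear form on V. Let 𝔏 be a Lie subalgebra of the Lie algebra of endomorphisms of V. Assume: (i) V is a simple 𝔏-module (no k-subspace of V other than 0 and V is stable under every element of 𝔏); (ii) there is a subset D ⊆ V such that 𝔏 is generated as a Lie algebra by the endomorphisms N_δ for δ ∈ D, and each such N_δ lies in 𝔰𝔭(V, ψ). Then 𝔏 = 𝔰𝔭(V, ψ). -/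
/-- For a bilinear form `ψ` on `V` and `δ ∈ V`, the endomorphism `N_δ : x ↦ ψ(x, δ) δ`. -/
noncomputable def vanishingCycleEndo {k V : Type*} [Field k] [AddCommGroup V] [Module k V]
    (ψ : LinearMap.BilinForm k V) (δ : V) : Module.End k V :=
  LinearMap.smulRight (ψ.flip δ) δ

attribute [local instance 100] LieRing.ofAssociativeRing

/-!
Write `S(u, v)` for the endomorphism `x ↦ ψ(x, u) v + ψ(x, v) u`, which is bilinear and symmetric
in `(u, v)`, with `S(δ, δ) = 2 N_δ`. The brackets `⁅N_b, N_a⁆ = ψ(a, b) S(a, b)` and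
`⁅N_b, S(u, a)⁆ = ψ(a, b) S(u, b) + ψ(u, b) S(a, b)` show that, for `u ∈ D`, the set of `a ∈ D`
with `S(u, a) ∈ 𝔏` contains `u` and contains every `b ∈ D` with `ψ(a, b) ≠ 0` for some member `a`.
The span of such a set is stable under every `N_δ` (an `N_δ` with `δ` outside the set kills it),
hence is `V` by irreducibility, so by bilinearity `S(u, v) ∈ 𝔏` for all `u, v ∈ V`.
Finally, an `f ∈ 𝔰𝔭(V, ψ)` equals `-½ ∑ᵢ S(f eᵢ, eᵢ')` for a basis `e` and its `ψ`-dual basis `e'`.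
-/

namespace Submodule

variable {R M : Type*} [CommRing R] [AddCommGroup M] [Module R M]

def stabilizerLieSubalgebra (W : Submodule R M) : LieSubalgebra R (Module.End R M) :=
  { W.compatibleMaps W with
    lie_mem' := fun {f g} hf hg x hx => by
      simpa [Ring.lie_def] using W.sub_mem (hf (hg hx)) (hg (hf hx)) }

@[simp] lemma mem_stabilizerLieSubalgebra {W : Submodule R M} {f : Module.End R M} :
    f ∈ W.stabilizerLieSubalgebra ↔ ∀ x ∈ W, f x ∈ W := Iff.rfl

end Submodule

@[simp] lemma vanishingCycleEndo_apply {k V : Type*} [Field k] [AddCommGroup V] [Module k V]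
    (ψ : LinearMap.BilinForm k V) (δ x : V) : vanishingCycleEndo ψ δ x = ψ x δ • δ := rfl

namespace LinearMap.BilinForm

variable {k V : Type*} [Field k] [AddCommGroup V] [Module k V] (ψ : LinearMap.BilinForm k V)

noncomputable def symRankTwoEndo : V →ₗ[k] V →ₗ[k] Module.End k V :=
  smulRightₗ ∘ₗ ψ.flip + (smulRightₗ ∘ₗ ψ.flip).flip

@[simp] lemma symRankTwoEndo_apply (u v x : V) :
    ψ.symRankTwoEndo u v x = ψ x u • v + ψ x v • u := rfl

lemma symRankTwoEndo_self (u : V) :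
    ψ.symRankTwoEndo u u = (2 : k) • vanishingCycleEndo ψ u := by
  ext x
  simp [two_smul]

variable {ψ}

lemma lie_vanishingCycleEndo (halt : ψ.IsAlt) (a b : V) :
    ⁅vanishingCycleEndo ψ b, vanishingCycleEndo ψ a⁆ = ψ a b • ψ.symRankTwoEndo a b := by
  ext x
  simp [Ring.lie_def, ← halt.neg_eq a b]
  module

lemma lie_vanishingCycleEndo_symRankTwoEndo (halt : ψ.IsAlt) (u a b : V) :
    ⁅vanishingCycleEndo ψ b, ψ.symRankTwoEndo u a⁆
      = ψ a b • ψ.symRankTwoEndo u b + ψ u b • ψ.symRankTwoEndo a b := by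
  ext x
  simp [Ring.lie_def, ← halt.neg_eq a b, ← halt.neg_eq u b]
  module

lemma Nondegenerate.span_singleton_ne_top [Nontrivial V] (hnd : ψ.Nondegenerate)
    (halt : ψ.IsAlt) (x : V) : Submodule.span k {x} ≠ ⊤ := by
  intro htop
  have hx : x = 0 := hnd.1 x fun y => by
    have hy : y ∈ Submodule.span k {x} := htop ▸ Submodule.mem_top
    obtain ⟨c, rfl⟩ := Submodule.mem_span_singleton.mp hy
    simp [halt.self_eq_zero]
  simp [hx] at htop

lemma sum_symRankTwoEndo_dualBasis {ι : Type*} [Fintype ι] [DecidableEq ι] (hnd : ψ.Nondegenerate)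
    (halt : ψ.IsAlt) {f : Module.End k V} (hf : f ∈ skewAdjointSubmodule ψ)
    (e : Module.Basis ι k V) :
    ∑ i, ψ.symRankTwoEndo (f (e i)) (ψ.dualBasis hnd e i) = -(2 : k) • f := by
  refine e.ext fun j => ?_
  have hskew : ∀ i, ψ (e j) (f (e i)) = -ψ (f (e j)) (e i) := fun i => by
    have := hf (e j) (e i)
    simp only [LinearMap.neg_apply] at this
    rw [this, neg_neg]
  have hdual : ∀ i, ψ (e j) (ψ.dualBasis hnd e i) = -if j = i then 1 else 0 := fun i => by
    rw [← halt.neg_eq, apply_dualBasis_left]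
  have hexpand : ∑ i, ψ (f (e j)) (e i) • ψ.dualBasis hnd e i = f (e j) := by
    simpa using (ψ.dualBasis hnd e).sum_repr (f (e j))
  simp only [LinearMap.sum_apply, symRankTwoEndo_apply, hskew, hdual, Finset.sum_add_distrib]
  simp [neg_smul, ite_smul, Finset.sum_neg_distrib, hexpand, two_smul]

lemma skewAdjointSubmodule_le_map₂_symRankTwoEndo [FiniteDimensional k V] [NeZero (2 : k)]
    (hnd : ψ.Nondegenerate) (halt : ψ.IsAlt) :
    skewAdjointSubmodule ψ ≤ Submodule.map₂ ψ.symRankTwoEndo ⊤ ⊤ := by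
  intro f hf
  let e := Module.finBasis k V
  have hf_eq : (-(2 : k))⁻¹ • ∑ i, ψ.symRankTwoEndo (f (e i)) (ψ.dualBasis hnd e i) = f := by
    rw [sum_symRankTwoEndo_dualBasis hnd halt hf e, smul_smul,
      inv_mul_cancel₀ (neg_ne_zero.mpr two_ne_zero), one_smul]
  rw [← hf_eq]
  exact Submodule.smul_mem _ _ <| Submodule.sum_mem _ fun i _ =>
    Submodule.apply_mem_map₂ _ Submodule.mem_top Submodule.mem_top

end LinearMap.BilinForm

section VanishingCycles

open LinearMap.BilinForm Submodule

variable {k V : Type*} [Field k] [AddCommGroup V] [Module k V] {ψ : LinearMap.BilinForm k V}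
  {L : LieSubalgebra k (Module.End k V)} {D : Set V}

lemma lieSpan_le_stabilizerLieSubalgebra_span {A : Set V}
    (hA : ∀ a ∈ A, ∀ b ∈ D, ψ a b ≠ 0 → b ∈ A) :
    LieSubalgebra.lieSpan k _ (vanishingCycleEndo ψ '' D) ≤ (span k A).stabilizerLieSubalgebra := by
  refine LieSubalgebra.lieSpan_le.mpr ?_
  rintro _ ⟨δ, hδ, rfl⟩
  rw [SetLike.mem_coe, mem_stabilizerLieSubalgebra]
  intro x hx
  rw [vanishingCycleEndo_apply]
  by_cases hδA : δ ∈ A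
  · exact smul_mem _ _ (subset_span hδA)
  · have horth : span k A ≤ LinearMap.ker (ψ.flip δ) :=
      span_le.mpr fun a ha => by_contra fun h => hδA (hA a ha δ hδ h)
    simp [show ψ x δ = 0 from horth hx]

lemma symRankTwoEndo_mem_of_mem (halt : ψ.IsAlt) (hN : ∀ δ ∈ D, vanishingCycleEndo ψ δ ∈ L)
    {a b : V} (ha : a ∈ D) (hb : b ∈ D) (hab : ψ a b ≠ 0) : ψ.symRankTwoEndo a b ∈ L := by
  have hlie := L.lie_mem (hN b hb) (hN a ha)
  rw [lie_vanishingCycleEndo halt] at hlie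
  simpa [hab] using L.smul_mem (ψ a b)⁻¹ hlie

lemma symRankTwoEndo_mem_of_adj (halt : ψ.IsAlt) (hN : ∀ δ ∈ D, vanishingCycleEndo ψ δ ∈ L)
    {u a b : V} (hu : ψ.symRankTwoEndo u a ∈ L) (ha : a ∈ D) (hb : b ∈ D) (hab : ψ a b ≠ 0) :
    ψ.symRankTwoEndo u b ∈ L := by
  have hlie := L.lie_mem (hN b hb) hu
  rw [lie_vanishingCycleEndo_symRankTwoEndo halt] at hlie
  have hsub := L.sub_mem hlie (L.smul_mem (ψ u b) (symRankTwoEndo_mem_of_mem halt hN ha hb hab))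
  simpa [hab] using L.smul_mem (ψ a b)⁻¹ hsub

lemma span_eq_top_of_closed (hgen : L = LieSubalgebra.lieSpan k _ (vanishingCycleEndo ψ '' D))
    (hsimple : ∀ W : Submodule k V, (∀ f ∈ L, ∀ x ∈ W, f x ∈ W) → W = ⊥ ∨ W = ⊤) {A : Set V}
    (hA : ∀ a ∈ A, ∀ b ∈ D, ψ a b ≠ 0 → b ∈ A) {a : V} (ha : a ∈ A) (ha0 : a ≠ 0) :
    span k A = ⊤ := by
  have hstab : L ≤ (span k A).stabilizerLieSubalgebra :=
    hgen ▸ lieSpan_le_stabilizerLieSubalgebra_span hA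
  refine (hsimple _ fun f hf => hstab hf).resolve_left fun hbot => ha0 ?_
  simpa [hbot] using subset_span (R := k) ha

lemma symRankTwoEndo_mem_of_left_mem (halt : ψ.IsAlt)
    (hgen : L = LieSubalgebra.lieSpan k _ (vanishingCycleEndo ψ '' D))
    (hsimple : ∀ W : Submodule k V, (∀ f ∈ L, ∀ x ∈ W, f x ∈ W) → W = ⊥ ∨ W = ⊤)
    {u : V} (hu : u ∈ D) (v : V) : ψ.symRankTwoEndo u v ∈ L := by
  have hN : ∀ δ ∈ D, vanishingCycleEndo ψ δ ∈ L := fun δ hδ =>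
    hgen ▸ LieSubalgebra.subset_lieSpan ⟨δ, hδ, rfl⟩
  obtain rfl | hu0 := eq_or_ne u 0
  · simp [L.zero_mem]
  let A := {a ∈ D | ψ.symRankTwoEndo u a ∈ L}
  have hA : ∀ a ∈ A, ∀ b ∈ D, ψ a b ≠ 0 → b ∈ A := fun a ha b hb hab =>
    ⟨hb, symRankTwoEndo_mem_of_adj halt hN ha.2 ha.1 hb hab⟩
  have huA : u ∈ A := ⟨hu, by rw [symRankTwoEndo_self]; exact L.smul_mem 2 (hN u hu)⟩
  have hle : span k A ≤ L.toSubmodule.comap (ψ.symRankTwoEndo u) :=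
    span_le.mpr fun a ha => ha.2
  exact hle (span_eq_top_of_closed hgen hsimple hA huA hu0 ▸ mem_top)

lemma span_eq_top_of_generated [Nontrivial V] (hnd : ψ.Nondegenerate) (halt : ψ.IsAlt)
    (hgen : L = LieSubalgebra.lieSpan k _ (vanishingCycleEndo ψ '' D))
    (hsimple : ∀ W : Submodule k V, (∀ f ∈ L, ∀ x ∈ W, f x ∈ W) → W = ⊥ ∨ W = ⊤) :
    span k D = ⊤ := by
  obtain ⟨δ, hδ, hδ0⟩ : ∃ δ ∈ D, δ ≠ 0 := by
    by_contra! hD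
    obtain ⟨x, hx⟩ := exists_ne (0 : V)
    -- With `D ⊆ {0}` every line would be an invariant subspace.
    refine hnd.span_singleton_ne_top halt x (span_eq_top_of_closed hgen hsimple ?_ rfl hx)
    intro a _ b hb hab
    simp [hD b hb] at hab
  exact span_eq_top_of_closed hgen hsimple (fun _ _ b hb _ => hb) hδ hδ0

lemma map₂_symRankTwoEndo_le [Nontrivial V] (hnd : ψ.Nondegenerate) (halt : ψ.IsAlt)
    (hgen : L = LieSubalgebra.lieSpan k _ (vanishingCycleEndo ψ '' D))
    (hsimple : ∀ W : Submodule k V, (∀ f ∈ L, ∀ x ∈ W, f x ∈ W) → W = ⊥ ∨ W = ⊤) :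
    map₂ ψ.symRankTwoEndo ⊤ ⊤ ≤ L.toSubmodule := by
  have hspan : map₂ ψ.symRankTwoEndo ⊤ ⊤
      = span k (Set.image2 (ψ.symRankTwoEndo · ·) D .univ) := by
    rw [← map₂_span_span, span_univ, span_eq_top_of_generated hnd halt hgen hsimple]
  rw [hspan, span_le]
  rintro _ ⟨u, hu, v, -, rfl⟩
  exact symRankTwoEndo_mem_of_left_mem halt hgen hsimple hu v

end VanishingCycles

/-- Lemma (5.11) of Deligne's Weil I: if `V` is a nonzero finite-dimensional vector space
over a field `k` of characteristic zero with a nondegenerate alternating form `ψ`, and a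
Lie subalgebra `𝔏 ⊆ End(V)` acts irreducibly on `V` and is generated by endomorphisms of
the form `N_δ : x ↦ ψ(x, δ) δ` (each lying in `𝔰𝔭(V, ψ)`), then `𝔏 = 𝔰𝔭(V, ψ)`. -/
theorem lieSubalgebra_eq_symplectic_of_generated_by_vanishing_cycles
    {k V : Type*} [Field k] [CharZero k] [AddCommGroup V] [Module k V]
    [FiniteDimensional k V] [Nontrivial V]
    (ψ : LinearMap.BilinForm k V) (hnd : ψ.Nondegenerate) (halt : ψ.IsAlt)
    (L : LieSubalgebra k (Module.End k V))
    (hsimple : ∀ W : Submodule k V, (∀ f ∈ L, ∀ x ∈ W, f x ∈ W) → W = ⊥ ∨ W = ⊤)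
    (D : Set V)
    (hmem : ∀ δ ∈ D, vanishingCycleEndo ψ δ ∈ skewAdjointLieSubalgebra ψ)
    (hgen : L = LieSubalgebra.lieSpan k (Module.End k V) (vanishingCycleEndo ψ '' D)) :
    L = skewAdjointLieSubalgebra ψ := by
  refine le_antisymm ?_ fun f hf => map₂_symRankTwoEndo_le hnd halt hgen hsimple <|
    LinearMap.BilinForm.skewAdjointSubmodule_le_map₂_symRankTwoEndo hnd halt hf
  rw [hgen, LieSubalgebra.lieSpan_le]
  rintro _ ⟨δ, hδ, rfl⟩
  exact hmem δ hδ
end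

section
/- Let k be a field of characteristic zero, V a finite-dimensional k-vector space, and ψ a nondegenerate alternating bilinear form on V. Then the Lie algebra 𝔰𝔭(V, ψ) is generated, as a Lie algebra, by the set of endomorphisms {N_δ : δ ∈ V}. -/
attribute [local instance] LieRing.ofAssociativeRing

/-!
Polarizing `δ ↦ N_δ` shows that `x ↦ ψ(x, u) v + ψ(x, v) u` lies in the span of the `N_δ`.
If `e` is the `ψ`-dual basis of a basis `b`, so that `x = ∑ ψ(x, eᵢ) bᵢ`, then every
endomorphism satisfies `f = ∑ ψ(·, eᵢ) f(bᵢ)`, and a skew-adjoint `f` also satisfies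
`f = ∑ ψ(·, f(bᵢ)) eᵢ` because `ψ` is alternating. Adding the two expressions writes `2 f`
as a sum of polarized terms, so `𝔰𝔭(V, ψ)` is already the linear span of the `N_δ`.
-/

namespace LinearMap.BilinForm

open Module

variable {k V : Type*} [Field k] [AddCommGroup V] [Module k V] (ψ : LinearMap.BilinForm k V)

@[simp]
lemma vanishingCycleEndo_apply (δ x : V) : vanishingCycleEndo ψ δ x = ψ x δ • δ := rfl

lemma isSkewAdjoint_vanishingCycleEndo (halt : ψ.IsAlt) (δ : V) :
    ψ.IsSkewAdjoint (vanishingCycleEndo ψ δ) := by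
  intro x y
  simp only [vanishingCycleEndo_apply, Pi.neg_apply, map_smul, map_neg, smul_apply,
    smul_eq_mul, ← halt.neg_eq δ y]
  ring

lemma vanishingCycleEndo_add (u v : V) :
    vanishingCycleEndo ψ (u + v) = vanishingCycleEndo ψ u + vanishingCycleEndo ψ v +
      (smulRight (ψ.flip u) v + smulRight (ψ.flip v) u) := by
  ext x
  simp only [vanishingCycleEndo_apply, LinearMap.add_apply, smulRight_apply, flip_apply,
    map_add, add_smul, smul_add]
  abel

lemma smulRight_add_smulRight_mem_span_vanishingCycleEndo (u v : V) :
    smulRight (ψ.flip u) v + smulRight (ψ.flip v) u ∈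
      Submodule.span k (Set.range (vanishingCycleEndo ψ)) := by
  have hpolar : smulRight (ψ.flip u) v + smulRight (ψ.flip v) u =
      vanishingCycleEndo ψ (u + v) - vanishingCycleEndo ψ u - vanishingCycleEndo ψ v := by
    rw [vanishingCycleEndo_add]
    abel
  rw [hpolar]
  exact Submodule.sub_mem _ (Submodule.sub_mem _ (Submodule.subset_span ⟨_, rfl⟩)
    (Submodule.subset_span ⟨_, rfl⟩)) (Submodule.subset_span ⟨_, rfl⟩)

variable {ψ} {ι : Type*} [DecidableEq ι] [Fintype ι]

lemma eq_sum_smulRight_flip_dualBasis (hnd : ψ.Nondegenerate) (b : Basis ι k V)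
    (f : End k V) :
    f = ∑ i, smulRight (ψ.flip (ψ.flip.dualBasis hnd.flip b i)) (f (b i)) := by
  ext x
  have hrepr : ∀ i, b.repr x i = ψ x (ψ.flip.dualBasis hnd.flip b i) := fun i => by
    rw [← dualBasis_repr_apply hnd, dualBasis_dualBasis_flip]
  conv_lhs => rw [← b.sum_repr x]
  simp [hrepr]

lemma eq_sum_smulRight_dualBasis_of_isSkewAdjoint (hnd : ψ.Nondegenerate) (halt : ψ.IsAlt)
    (b : Basis ι k V) {f : End k V} (hf : ψ.IsSkewAdjoint f) :
    f = ∑ i, smulRight (ψ.flip (f (b i))) (ψ.flip.dualBasis hnd.flip b i) := by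
  ext x
  conv_lhs => rw [← (ψ.flip.dualBasis hnd.flip b).sum_repr (f x)]
  rw [LinearMap.sum_apply]
  refine Finset.sum_congr rfl fun i _ => ?_
  rw [dualBasis_repr_apply, flip_apply, smulRight_apply, flip_apply, ← halt.neg_eq, hf x (b i),
    Pi.neg_apply, map_neg, neg_neg]

lemma mem_span_vanishingCycleEndo_of_isSkewAdjoint [NeZero (2 : k)] [FiniteDimensional k V]
    (hnd : ψ.Nondegenerate) (halt : ψ.IsAlt) {f : End k V} (hf : ψ.IsSkewAdjoint f) :
    f ∈ Submodule.span k (Set.range (vanishingCycleEndo ψ)) := by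
  classical
  let b := Module.finBasis k V
  let e := ψ.flip.dualBasis hnd.flip b
  have htwo : (2 : k) • f =
      ∑ i, (smulRight (ψ.flip (e i)) (f (b i)) + smulRight (ψ.flip (f (b i))) (e i)) := by
    rw [two_smul, Finset.sum_add_distrib, ← eq_sum_smulRight_flip_dualBasis hnd b f,
      ← eq_sum_smulRight_dualBasis_of_isSkewAdjoint hnd halt b hf]
  rw [← inv_smul_smul₀ (two_ne_zero' k) f, htwo]
  exact Submodule.smul_mem _ _ <| Submodule.sum_mem _ fun i _ =>
    smulRight_add_smulRight_mem_span_vanishingCycleEndo ψ _ _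

end LinearMap.BilinForm

/-- The fact used at the end of the proof of Lemma (5.11) of Deligne's Weil I: for a
nondegenerate alternating form `ψ` on a finite-dimensional vector space `V` over a field
of characteristic zero, the Lie algebra `𝔰𝔭(V, ψ)` is generated, as a Lie algebra, by
the endomorphisms `N_δ : x ↦ ψ(x, δ) δ` for `δ ∈ V`. -/
theorem symplectic_lieAlgebra_generated_by_vanishing_cycles
    {k V : Type*} [Field k] [CharZero k] [AddCommGroup V] [Module k V]
    [FiniteDimensional k V]
    (ψ : LinearMap.BilinForm k V) (hnd : ψ.Nondegenerate) (halt : ψ.IsAlt) :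
    skewAdjointLieSubalgebra ψ =
      LieSubalgebra.lieSpan k (Module.End k V) (Set.range (vanishingCycleEndo ψ)) := by
  apply le_antisymm
  · intro f hf
    have hf' : ψ.IsSkewAdjoint f := (LinearMap.mem_skewAdjointSubmodule f).mp hf
    exact LieSubalgebra.submodule_span_le_lieSpan <|
      LinearMap.BilinForm.mem_span_vanishingCycleEndo_of_isSkewAdjoint hnd halt hf'
  · rw [LieSubalgebra.lieSpan_le]
    rintro _ ⟨δ, rfl⟩
    exact (LinearMap.mem_skewAdjointSubmodule _).mpr <|
      LinearMap.BilinForm.isSkewAdjoint_vanishingCycleEndo ψ halt δ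
end

section
/- Let q > 1 and r ≥ 0 be real numbers and d a real number. Suppose that for every even integer k ≥ 2 one has q^{(kd − 1)/2} ≤ r^k ≤ q^{(kd + 1)/2}. Then r = q^{d/2}. -/
/-- The limiting squeeze argument of (7.3) in Deligne's Weil I: if `q > 1`, `r ≥ 0` and
`q^{(kd-1)/2} ≤ rᵏ ≤ q^{(kd+1)/2}` for every even integer `k ≥ 2`, then `r = q^{d/2}`. -/
theorem eq_rpow_half_of_rpow_squeeze
    (q r d : ℝ) (hq : 1 < q) (hr : 0 ≤ r)
    (h : ∀ k : ℕ, Even k → 2 ≤ k →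
      q ^ (((k : ℝ) * d - 1) / 2) ≤ r ^ k ∧ r ^ k ≤ q ^ (((k : ℝ) * d + 1) / 2)) :
    r = q ^ (d / 2) := by
  have hq0 : 0 < q := lt_trans one_pos hq
  have hlq : 0 < Real.log q := Real.log_pos hq
  have hr0 : 0 < r := by
    rcases h 2 (by norm_num) le_rfl with ⟨h1, _⟩
    have hp : (0:ℝ) < r ^ 2 := lt_of_lt_of_le (Real.rpow_pos_of_pos hq0 _) h1
    rcases hr.lt_or_eq with h' | h'
    · exact h'
    · exfalso; rw [← h'] at hp; simp at hp
  set L : ℝ := Real.log r - d / 2 * Real.log q with hLdef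
  have hL : ∀ k : ℕ, Even k → 2 ≤ k → |L| * (2 * k) ≤ Real.log q := by
    intro k hk hk2
    obtain ⟨h1, h2⟩ := h k hk hk2
    have hk0 : (0:ℝ) < k := by exact_mod_cast lt_of_lt_of_le two_pos hk2
    have l1 : ((k : ℝ) * d - 1) / 2 * Real.log q ≤ (k : ℝ) * Real.log r := by
      have := Real.log_le_log (Real.rpow_pos_of_pos hq0 _) h1
      rwa [Real.log_rpow hq0, Real.log_pow] at this
    have l2 : (k : ℝ) * Real.log r ≤ ((k : ℝ) * d + 1) / 2 * Real.log q := by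
      have := Real.log_le_log (pow_pos hr0 k) h2
      rwa [Real.log_rpow hq0, Real.log_pow] at this
    have e1 : (k:ℝ) * L = (k:ℝ) * Real.log r - (k:ℝ) * d / 2 * Real.log q := by
      rw [hLdef]; ring
    have u1 : (k:ℝ) * L ≤ Real.log q / 2 := by rw [e1]; linarith
    have u2 : -(Real.log q / 2) ≤ (k:ℝ) * L := by rw [e1]; linarith
    have habs2 : |(k:ℝ) * L| ≤ Real.log q / 2 := abs_le.mpr ⟨u2, u1⟩
    have : |L| * (2 * (k:ℝ)) = 2 * |(k:ℝ) * L| := by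
      rw [abs_mul, abs_of_pos hk0]; ring
    linarith [this, habs2]
  have hL0 : L = 0 := by
    by_contra hne
    have habs : 0 < |L| := abs_pos.mpr hne
    obtain ⟨n, hn⟩ := exists_nat_gt (Real.log q / (2 * |L|))
    have hk := hL (2 * n + 2) ⟨n + 1, by ring⟩ (by omega)
    have hkc : ((2 * n + 2 : ℕ) : ℝ) = 2 * n + 2 := by push_cast; ring
    rw [hkc] at hk
    have hn' : Real.log q < (n : ℝ) * (2 * |L|) := by
      rw [div_lt_iff₀ (by positivity)] at hn; linarith
    have hnn : (0:ℝ) ≤ n := Nat.cast_nonneg n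
    nlinarith
  have hlog : Real.log r = d / 2 * Real.log q := by
    have := sub_eq_zero.mp hL0
    linarith [sub_eq_zero.mp hL0]
  calc r = Real.exp (Real.log r) := (Real.exp_log hr0).symm
    _ = Real.exp (Real.log q * (d / 2)) := by rw [hlog]; ring_nf
    _ = q ^ (d / 2) := (Real.rpow_def_of_pos hq0 _).symm
end

section
/- Let K be a field, V and W finite-dimensional K-vector spaces, and B : V × W → K a perfect bilinear pairing (the induced linear maps V → W* and W → V* are bijective). Let f : V → V and g : W → W be linear endomorphisms and c ∈ K a nonzero scalar such that B(f v, g w) = c·B(v, w) for all v ∈ V, w ∈ W. Then f and g are bijective, and the characteristic polynomial of g equals the characteristic polynomial of the endomorphism c·f⁻¹ of V. In particular, if α is a root of the characteristic polynomial of f in some extension of K, then c/α is a root of the characteristic polynomial of g. -/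
/-!
Transported along the isomorphism `W ≃ Dual K V` given by the pairing, `g` becomes the transpose
of `c • f⁻¹`, so the two have the same characteristic polynomial. After base change to `L`, an
eigenvalue `α` of `f` gives the eigenvalue `c / α` of `c • f⁻¹`.
-/

theorem LinearMap.charpoly_dualMap {R M : Type*} [CommRing R] [AddCommGroup M] [Module R M]
    [Module.Free R M] [Module.Finite R M] (f : Module.End R M) :
    f.dualMap.charpoly = f.charpoly := by
  let b := Module.Free.chooseBasis R M
  rw [← f.charpoly_toMatrix b, ← f.dualMap.charpoly_toMatrix b.dualBasis, LinearMap.dualMap_def,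
    LinearMap.toMatrix_transpose, Matrix.charpoly_transpose]

theorem LinearMap.charpoly_eq_of_adjoint_of_bijective_flip {R V W : Type*} [CommRing R]
    [AddCommGroup V] [Module R V] [Module.Free R V] [Module.Finite R V]
    [AddCommGroup W] [Module R W] [Module.Free R W] [Module.Finite R W]
    (B : V →ₗ[R] W →ₗ[R] R) (hB : Function.Bijective B.flip) {h : Module.End R V}
    {g : Module.End R W} (hgh : ∀ v w, B v (g w) = B (h v) w) :
    g.charpoly = h.charpoly := by
  let e := LinearEquiv.ofBijective B.flip hB
  have hconj : e.conj g = h.dualMap := by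
    ext φ v
    calc B v (g (e.symm φ)) = B (h v) (e.symm φ) := hgh v _
      _ = φ (h v) := congr($(e.apply_symm_apply φ) (h v))
  rw [← e.charpoly_conj g, hconj, charpoly_dualMap]

theorem LinearMap.injective_of_map_map_eq_mul {R V W : Type*} [CommRing R] [NoZeroDivisors R]
    [AddCommGroup V] [Module R V] [AddCommGroup W] [Module R W]
    {B : V →ₗ[R] W →ₗ[R] R} (hB : Function.Injective B) {f : Module.End R V}
    {g : Module.End R W} {c : R} (hc : c ≠ 0) (hfg : ∀ v w, B (f v) (g w) = c * B v w) :
    Function.Injective f := by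
  refine (injective_iff_map_eq_zero f).mpr fun v hv => hB ?_
  ext w
  simpa [hv, hc] using (hfg v w).symm

theorem spectrum.div_mem_smul_of_mul_eq_one {K A : Type*} [Field K] [Ring A] [Algebra K A]
    {a b : A} (hab : a * b = 1) (hba : b * a = 1) {c : K} (hc : c ≠ 0) {α : K}
    (hα : α ∈ spectrum K a) : c / α ∈ spectrum K (c • b) := by
  let u : Aˣ := ⟨a, b, hab, hba⟩
  have hinv : α⁻¹ ∈ spectrum K b := by
    rw [show b = ↑u⁻¹ from rfl, ← spectrum.map_inv]
    exact Set.inv_mem_inv.mpr hα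
  rw [show c • b = Units.mk0 c hc • b from rfl, spectrum.unit_smul_eq_smul, div_eq_mul_inv]
  exact Set.smul_mem_smul_set hinv

theorem LinearMap.isRoot_charpoly_map_smul_of_mul_eq_one {K V : Type*} [Field K]
    [AddCommGroup V] [Module K V] [FiniteDimensional K V] (L : Type*) [Field L] [Algebra K L]
    {f f' : Module.End K V} (hff' : f * f' = 1) (hf'f : f' * f = 1) {c : K} (hc : c ≠ 0)
    {α : L} (hα : (f.charpoly.map (algebraMap K L)).IsRoot α) :
    ((c • f').charpoly.map (algebraMap K L)).IsRoot (algebraMap K L c / α) := by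
  rw [← charpoly_baseChange, ← Module.End.mem_spectrum_iff_isRoot_charpoly] at hα ⊢
  rw [baseChange_smul, ← algebraMap_smul L c]
  exact spectrum.div_mem_smul_of_mul_eq_one (by rw [← baseChange_mul, hff', baseChange_one])
    (by rw [← baseChange_mul, hf'f, baseChange_one]) ((_root_.map_ne_zero _).mpr hc) hα

/-- The linear-algebra content of (2.4) in Deligne's Weil I (Poincaré duality and Frobenius
eigenvalues): if `B : V × W → K` is a perfect pairing of finite-dimensional vector spaces
and `f`, `g` are endomorphisms with `B(f v, g w) = c · B(v, w)` for a nonzero scalar `c`,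
then `f` and `g` are bijective, the characteristic polynomial of `g` equals that of
`c • f⁻¹`, and in particular if `α` is a root of the characteristic polynomial of `f` in
an extension of `K` then `c/α` is a root of the characteristic polynomial of `g`. -/
theorem charpoly_of_adjoint_wrt_perfect_pairing
    {K : Type u} {V : Type v} {W : Type w} [Field K]
    [AddCommGroup V] [Module K V] [AddCommGroup W] [Module K W]
    [FiniteDimensional K V] [FiniteDimensional K W]
    (B : V →ₗ[K] W →ₗ[K] K)
    (hB₁ : Function.Bijective B) (hB₂ : Function.Bijective B.flip)
    (f : Module.End K V) (g : Module.End K W) (c : K) (hc : c ≠ 0)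
    (hfg : ∀ (v : V) (w : W), B (f v) (g w) = c * B v w) :
    Function.Bijective f ∧ Function.Bijective g ∧
    ∃ f' : Module.End K V, f' * f = 1 ∧ f * f' = 1 ∧
      g.charpoly = (c • f').charpoly ∧
      ∀ (L : Type u) [Field L] [Algebra K L] (α : L),
        (f.charpoly.map (algebraMap K L)).IsRoot α →
        (g.charpoly.map (algebraMap K L)).IsRoot (algebraMap K L c / α) := by
  have hf : Function.Bijective f :=
    have hinj := LinearMap.injective_of_map_map_eq_mul hB₁.injective hc hfg
    ⟨hinj, LinearMap.injective_iff_surjective.mp hinj⟩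
  have hg : Function.Bijective g :=
    have hinj := LinearMap.injective_of_map_map_eq_mul (B := B.flip) hB₂.injective hc
      fun w v => hfg v w
    ⟨hinj, LinearMap.injective_iff_surjective.mp hinj⟩
  have hunit : IsUnit f := (Module.End.isUnit_iff f).mpr hf
  set f' : Module.End K V := ↑hunit.unit⁻¹
  have hff' : f * f' = 1 := hunit.mul_val_inv
  have hf'f : f' * f = 1 := hunit.val_inv_mul
  have hadj : ∀ v w, B v (g w) = B ((c • f') v) w := fun v w => by
    have h := hfg (f' v) w
    rw [← Module.End.mul_apply, hff', Module.End.one_apply] at h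
    rw [h, LinearMap.smul_apply, map_smul, LinearMap.smul_apply, smul_eq_mul]
  have hchar : g.charpoly = (c • f').charpoly :=
    LinearMap.charpoly_eq_of_adjoint_of_bijective_flip B hB₂ hadj
  refine ⟨hf, hg, f', hf'f, hff', hchar, fun L _ _ α hα => ?_⟩
  rw [hchar]
  exact LinearMap.isRoot_charpoly_map_smul_of_mul_eq_one L hff' hf'f hc hα
end

section
/- Let K be a field, V a finite-dimensional K-vector space, ψ a nondegenerate bilinear form on V, f : V → V a linear endomorphism, and c ∈ K a nonzero scalar such that ψ(f x, f y) = c·ψ(x, y) for all x, y ∈ V. Then f is bijective and the characteristic polynomial of f equals the characteristic polynomial of c·f⁻¹; in particular, the multiset of roots of the characteristic polynomial of f (in any extension field where it splits) is stable under the involution α ↦ c/α. -/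
/-!
Writing `f'` for the inverse of `f`, the similitude identity gives `ψ (f x) y = ψ x (c • f' y)`:
`c • f'` is the `ψ`-adjoint of `f`. Through the isomorphism `V ≃ V*` given by `ψ`, the adjoint
becomes the dual map, which has the same characteristic polynomial as `f`.

For the roots, note that `χ_{A⁻¹}` is a constant multiple of the reverse of `χ_A`, whose roots are
the inverses of those of `χ_A`, and that `χ_{c • B}(c X) = c ^ n χ_B(X)`. Hence the roots of
`χ_{c • f'} = χ_f` are the `c / α`, `α` running over the roots of `χ_f`.
-/

open Polynomial

universe u v

namespace Polynomial

theorem reverse_pow {R : Type*} [Semiring R] [NoZeroDivisors R] (p : R[X]) (n : ℕ) :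
    (p ^ n).reverse = p.reverse ^ n := by
  induction n with
  | zero => simpa using reverse_C (1 : R)
  | succ n ih => rw [pow_succ, reverse_mul_of_domain, ih, pow_succ]

variable {F : Type*} [Field F]

theorem reverse_X_sub_C_of_ne_zero {a : F} (ha : a ≠ 0) :
    (X - C a).reverse = C (-a) * (X - C a⁻¹) := by
  have hX : (X : F[X]).reverse = 1 := by rw [← one_mul X, reverse_mul_X, ← C_1, reverse_C]
  rw [sub_eq_add_neg, ← C_neg, reverse_add_C, hX, natDegree_X, pow_one, mul_sub, ← C_mul,
    neg_mul, mul_inv_cancel₀ ha, C_neg, C_neg, C_1]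
  ring

theorem eval_inv_reverse_ne_zero {p : F[X]} {a : F} (ha : a ≠ 0) (hpa : p.eval a ≠ 0) :
    p.reverse.eval a⁻¹ ≠ 0 := by
  let := invertibleOfNonzero ha
  rwa [← invOf_eq_inv, ← eval₂_id, ne_eq, eval₂_reverse_eq_zero_iff, eval₂_id]

theorem rootMultiplicity_inv_reverse (p : F[X]) {a : F} (ha : a ≠ 0) :
    p.reverse.rootMultiplicity a⁻¹ = p.rootMultiplicity a := by
  rcases eq_or_ne p 0 with rfl | hp
  · simp
  obtain ⟨q, hpq, hq⟩ := exists_eq_pow_rootMultiplicity_mul_and_not_dvd p hp a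
  set m := p.rootMultiplicity a
  have hrev : p.reverse = C ((-a) ^ m) * q.reverse * (X - C a⁻¹) ^ m := by
    rw [hpq, reverse_mul_of_domain, reverse_pow, reverse_X_sub_C_of_ne_zero ha, mul_pow, C_pow]
    ring
  have hroot : (C ((-a) ^ m) * q.reverse).eval a⁻¹ ≠ 0 := by
    rw [eval_mul, eval_C]
    exact mul_ne_zero (pow_ne_zero _ (neg_ne_zero.mpr ha))
      (eval_inv_reverse_ne_zero ha (by rwa [dvd_iff_isRoot] at hq))
  rw [hrev, rootMultiplicity_mul_X_sub_C_pow (fun h => hroot (by rw [h, eval_zero])),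
    rootMultiplicity_eq_zero hroot, zero_add]

theorem roots_reverse {p : F[X]} (hp : p.coeff 0 ≠ 0) :
    p.reverse.roots = p.roots.map (·⁻¹) := by
  classical
  ext a
  rw [← inv_inv a, Multiset.count_map_eq_count' _ _ inv_injective, count_roots, count_roots]
  rcases eq_or_ne a 0 with rfl | ha
  · have hp0 : p ≠ 0 := fun h => hp (by rw [h, coeff_zero])
    simp only [inv_zero]
    rw [rootMultiplicity_eq_zero, rootMultiplicity_eq_zero]
    · rwa [IsRoot, ← coeff_zero_eq_eval_zero]
    · rw [IsRoot, ← coeff_zero_eq_eval_zero, coeff_zero_reverse]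
      exact leadingCoeff_ne_zero.mpr hp0
  · exact rootMultiplicity_inv_reverse p (inv_ne_zero ha)

theorem roots_comp_C_mul_X (p : F[X]) {a : F} (ha : a ≠ 0) :
    (p.comp (C a * X)).roots = p.roots.map (a⁻¹ * ·) := by
  classical
  ext b
  have hb : b = a⁻¹ * (a * b) := by rw [inv_mul_cancel_left₀ ha]
  rw [hb, Multiset.count_map_eq_count' _ _ (mul_right_injective₀ (inv_ne_zero ha)), count_roots,
    count_roots, ← hb, ← add_zero (C a * X), ← C_0,
    rootMultiplicity_comp_C_mul_X_add_C _ _ _ _ (isUnit_iff_ne_zero.mpr ha), add_zero]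

end Polynomial

namespace Matrix

variable {n : Type*} [Fintype n] [DecidableEq n]

theorem charpoly_smul_comp {R : Type*} [CommRing R] (M : Matrix n n R) (c : R) :
    (c • M).charpoly.comp (C c * X) = C c ^ Fintype.card n * M.charpoly := by
  have hmap : (charmatrix (c • M)).map (compRingHom (C c * X)) = C c • charmatrix M := by
    ext i j : 1
    by_cases hij : i = j
    · subst hij
      simp only [coe_compRingHom, map_apply, charmatrix_apply_eq, smul_apply, smul_eq_mul, map_mul,
        sub_comp, X_comp, mul_comp, C_comp]
      ring
    · simp [charmatrix_apply_ne _ _ _ hij]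
  rw [charpoly, ← coe_compRingHom_apply, RingHom.map_det, RingHom.mapMatrix_apply, hmap,
    det_smul, charpoly]

variable {F : Type*} [Field F]

theorem roots_charpoly_smul (M : Matrix n n F) {c : F} (hc : c ≠ 0) :
    (c • M).charpoly.roots = M.charpoly.roots.map (c * ·) := by
  have h := charpoly_smul_comp (c • M) c⁻¹
  rw [inv_smul_smul₀ hc, ← C_pow] at h
  rw [← roots_C_mul _ (pow_ne_zero _ (inv_ne_zero hc)), ← h, roots_comp_C_mul_X _ (inv_ne_zero hc),
    inv_inv]

theorem roots_charpoly_inv {A : Matrix n n F} (hA : IsUnit A) :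
    A⁻¹.charpoly.roots = A.charpoly.roots.map (·⁻¹) := by
  have hdet : A.det ≠ 0 := ((isUnit_iff_isUnit_det A).mp hA).ne_zero
  have hcoeff : A.charpoly.coeff 0 ≠ 0 := fun h =>
    hdet (by rw [det_eq_sign_charpoly_coeff, h, mul_zero])
  have hconst : ((-1) ^ Fintype.card n * C (Ring.inverse A.det) : F[X]) =
      C ((-1) ^ Fintype.card n * A.det⁻¹) := by simp
  rw [charpoly_inv A hA, ← reverse_charpoly, hconst,
    roots_C_mul _ (mul_ne_zero (pow_ne_zero _ (neg_ne_zero.mpr one_ne_zero)) (inv_ne_zero hdet)),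
    roots_reverse hcoeff]

theorem roots_charpoly_of_mul_eq_smul_one {A B : Matrix n n F} {c : F} (hc : c ≠ 0)
    (h : B * A = c • 1) : B.charpoly.roots = A.charpoly.roots.map (c / ·) := by
  have hleft : (c⁻¹ • B) * A = 1 := by rw [smul_mul_assoc, h, inv_smul_smul₀ hc]
  have hA : IsUnit A := (isUnit_iff_isUnit_det A).mpr (isUnit_det_of_left_inverse hleft)
  have hB : B = c • A⁻¹ := by rw [inv_eq_left_inv hleft, smul_inv_smul₀ hc]
  rw [hB, roots_charpoly_smul _ hc, roots_charpoly_inv hA, Multiset.map_map]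
  simp only [Function.comp_def, div_eq_mul_inv]

end Matrix

namespace LinearMap

theorem charpoly_dualMap_s17 {R M : Type*} [CommRing R] [AddCommGroup M] [Module R M]
    [Module.Free R M] [Module.Finite R M] (f : Module.End R M) :
    f.dualMap.charpoly = f.charpoly := by
  nontriviality R
  let b := Module.Free.chooseBasis R M
  rw [← charpoly_toMatrix f b, ← charpoly_toMatrix f.dualMap b.dualBasis, dualMap_def,
    toMatrix_transpose, Matrix.charpoly_transpose]

variable {F V : Type*} [Field F] [AddCommGroup V] [Module F V]

theorem roots_charpoly_of_mul_eq_smul_one [FiniteDimensional F V] {f g : Module.End F V} {c : F}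
    (hc : c ≠ 0) (h : g * f = c • 1) : g.charpoly.roots = f.charpoly.roots.map (c / ·) := by
  let b := Module.finBasis F V
  have hmat : toMatrix b b g * toMatrix b b f = c • 1 := by
    rw [← toMatrix_mul, h, map_smul, toMatrix_one]
  simpa only [charpoly_toMatrix] using Matrix.roots_charpoly_of_mul_eq_smul_one hc hmat

theorem SeparatingLeft.injective_of_similitude {ψ : LinearMap.BilinForm F V}
    (hψ : ψ.SeparatingLeft) {f : Module.End F V} {c : F} (hc : c ≠ 0)
    (hf : ∀ x y, ψ (f x) (f y) = c * ψ x y) : Function.Injective f :=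
  (injective_iff_map_eq_zero f).mpr fun x hx => hψ x fun y => by
    simpa [hx, hc] using (hf x y).symm

namespace BilinForm

variable {ψ : LinearMap.BilinForm F V}

theorem isAdjointPair_smul_of_similitude {f g : Module.End F V} {c : F}
    (hf : ∀ x y, ψ (f x) (f y) = c * ψ x y) (hfg : f * g = 1) : IsAdjointPair ψ ψ f (c • g) := by
  intro x y
  calc ψ (f x) y = ψ (f x) (f (g y)) := by rw [← Module.End.mul_apply, hfg, Module.End.one_apply]
    _ = ψ x ((c • g) y) := by rw [hf, smul_apply, map_smul, smul_eq_mul]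

theorem Nondegenerate.charpoly_eq_of_isAdjointPair [FiniteDimensional F V]
    (hψ : ψ.Nondegenerate) {f g : Module.End F V} (h : IsAdjointPair ψ ψ f g) :
    f.charpoly = g.charpoly := by
  have hconj : (ψ.toDual hψ).conj f = g.dualMap := by
    ext φ y
    obtain ⟨x, rfl⟩ := (ψ.toDual hψ).surjective φ
    simp [toDual_def, h x y]
  rw [← LinearEquiv.charpoly_conj (ψ.toDual hψ) f, hconj, charpoly_dualMap_s17]

end BilinForm

end LinearMap

/-- The symmetry of Frobenius eigenvalues used at the end of the proof of Theorem (3.2)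
in Deligne's Weil I: if `ψ` is a nondegenerate bilinear form on a finite-dimensional
vector space `V` and `f` is an endomorphism with `ψ(f x, f y) = c · ψ(x, y)` for some
nonzero scalar `c`, then `f` is bijective and the characteristic polynomial of `f`
equals the characteristic polynomial of `c • f⁻¹`; in particular the multiset of roots
of the characteristic polynomial of `f` in any extension of `K` is stable under
`α ↦ c/α`. -/
theorem charpoly_self_eq_charpoly_smul_inv_of_similitude
    {K : Type u} {V : Type v} [Field K] [AddCommGroup V] [Module K V]
    [FiniteDimensional K V]
    (ψ : LinearMap.BilinForm K V) (hnd : ψ.Nondegenerate)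
    (f : Module.End K V) (c : K) (hc : c ≠ 0)
    (hψ : ∀ x y : V, ψ (f x) (f y) = c * ψ x y) :
    Function.Bijective f ∧
    ∃ f' : Module.End K V, f' * f = 1 ∧ f * f' = 1 ∧
      f.charpoly = (c • f').charpoly ∧
      ∀ (L : Type u) [Field L] [Algebra K L],
        ((f.charpoly.map (algebraMap K L)).roots.map
          fun α => algebraMap K L c / α) = (f.charpoly.map (algebraMap K L)).roots := by
  have hinj := hnd.1.injective_of_similitude hc hψ
  have hbij : Function.Bijective f := ⟨hinj, LinearMap.injective_iff_surjective.mp hinj⟩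
  obtain ⟨u, rfl⟩ := (Module.End.isUnit_iff f).mpr hbij
  have hchar : (u : Module.End K V).charpoly = (c • ↑u⁻¹ : Module.End K V).charpoly :=
    hnd.charpoly_eq_of_isAdjointPair
      (LinearMap.BilinForm.isAdjointPair_smul_of_similitude hψ u.mul_inv)
  refine ⟨hbij, ↑u⁻¹, u.inv_mul, u.mul_inv, hchar, fun L _ _ => ?_⟩
  have hbase : (c • (↑u⁻¹ : Module.End K V)).baseChange L * (u : Module.End K V).baseChange L =
      algebraMap K L c • 1 := by
    rw [← LinearMap.baseChange_mul, smul_mul_assoc, u.inv_mul, LinearMap.baseChange_smul,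
      LinearMap.baseChange_one, algebraMap_smul]
  have hroots := LinearMap.roots_charpoly_of_mul_eq_smul_one
    ((map_ne_zero (algebraMap K L)).mpr hc) hbase
  rw [LinearMap.charpoly_baseChange, LinearMap.charpoly_baseChange, ← hchar] at hroots
  exact hroots.symm
end
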